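/- arXiv:2305.18886 — 9 statements merged into one kernel-verified Lean document; each statement's English description precedes it below -/
import Mathlib

section
/- The implicit time step of the fully discrete scheme is uniquely solvable: for any previous-step vector w ∈ ℝ^{N+1} and any boundary values p, q ∈ ℝ, there exists exactly one u ∈ ℝ^{N+1} such that, writing δ_i = (u_i − u_{i−1})/h for 1 ≤ i ≤ N, one has (h/τ)(β(u_i) − β(w_i)) − (μ(δ_{i+1}) − μ(δ_i)) = 0 for 1 ≤ i ≤ N−1, (h/(2τ))(β(u_0) − β(w_0)) − μ(δ_1) + α u_0 = α p, and (h/(2τ))(β(u_N) − β(w_N)) + μ(δ_N) + α u_N = α q. -/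
open Filter

private lemma hasDerivAt_primitive' {f : ℝ → ℝ} (hf : Continuous f) (x : ℝ) :
    HasDerivAt (fun u => ∫ s in (0:ℝ)..u, f s) (f x) x :=
  intervalIntegral.integral_hasDerivAt_right (hf.intervalIntegrable 0 x)
    (hf.stronglyMeasurableAtFilter _ _) hf.continuousAt

private lemma primitive_nonneg' {f : ℝ → ℝ} (hmono : Monotone f) (h0 : f 0 = 0) (x : ℝ) :
    0 ≤ ∫ s in (0:ℝ)..x, f s := by
  rcases le_or_gt 0 x with hx | hx
  · exact intervalIntegral.integral_nonneg hx (fun s hs => h0 ▸ hmono hs.1)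
  · have h1 : 0 ≤ ∫ s in x..(0:ℝ), -f s :=
      intervalIntegral.integral_nonneg hx.le (fun s hs => by
        simpa using h0 ▸ hmono hs.2)
    rw [intervalIntegral.integral_neg] at h1
    rw [intervalIntegral.integral_symm]
    linarith

private lemma tendsto_coercive' {B : ℝ → ℝ}
    (hB : Tendsto (fun u => B u / |u|) (cocompact ℝ) atTop)
    (c a : ℝ) (hc : 0 < c) :
    Tendsto (fun x => c * (B x - a * x)) (cocompact ℝ) atTop := by
  have h1 : ∀ᶠ x : ℝ in cocompact ℝ, 1 ≤ |x| := by
    rw [cocompact_eq_atBot_atTop]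
    refine Filter.eventually_sup.2 ⟨?_, ?_⟩
    · filter_upwards [eventually_le_atBot (-1:ℝ)] with x hx
      rw [abs_of_nonpos (by linarith)]; linarith
    · filter_upwards [eventually_ge_atTop (1:ℝ)] with x hx
      rw [abs_of_nonneg (by linarith)]; linarith
  rw [tendsto_atTop]
  intro b
  filter_upwards [hB.eventually_ge_atTop (|a| + |b / c| + 1), h1] with x hx h1x
  have hxpos : (0:ℝ) < |x| := by linarith
  have hBx : (|a| + |b / c| + 1) * |x| ≤ B x := (le_div_iff₀ hxpos).mp hx
  have hax : a * x ≤ |a| * |x| := by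
    calc a * x ≤ |a * x| := le_abs_self _
    _ = |a| * |x| := abs_mul a x
  have h2 : b / c ≤ B x - a * x := by
    have e1 : |b / c| ≤ (|b/c| + 1) * |x| := by nlinarith [abs_nonneg (b/c)]
    have e2 : (|a| + |b / c| + 1) * |x| = |a| * |x| + (|b/c| + 1) * |x| := by ring
    linarith [le_abs_self (b/c)]
  calc b = c * (b / c) := by field_simp
  _ ≤ c * (B x - a * x) := mul_le_mul_of_nonneg_left h2 hc.le

private lemma exists_radius' {f : ℝ → ℝ} (hf : Tendsto f (cocompact ℝ) atTop) (b : ℝ) :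
    ∃ R : ℝ, 0 < R ∧ ∀ x, R < |x| → b ≤ f x := by
  rw [cocompact_eq_atBot_atTop, tendsto_sup] at hf
  obtain ⟨x0, hx0⟩ := (hf.1.eventually_ge_atTop b).exists_forall_of_atBot
  obtain ⟨x1, hx1⟩ := (hf.2.eventually_ge_atTop b).exists_forall_of_atTop
  refine ⟨max 1 (max |x0| |x1|), by positivity, fun x hx => ?_⟩
  rcases le_or_gt 0 x with hxx | hxx
  · apply hx1
    rw [abs_of_nonneg hxx] at hx
    have : |x1| ≤ max 1 (max |x0| |x1|) := le_max_of_le_right (le_max_right _ _)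
    linarith [le_abs_self x1]
  · apply hx0
    rw [abs_of_neg hxx] at hx
    have : |x0| ≤ max 1 (max |x0| |x1|) := le_max_of_le_right (le_max_left _ _)
    linarith [neg_abs_le x0]


/-- Nodal equations of one implicit Euler step of the mass-lumped P1 finite element
discretization of `∂ₜ β(u) - ∂ₓ μ(∂ₓ u) = 0` with Robin boundary conditions, on a
uniform grid with `N + 1` nodes, mesh size `h`, time step `τ`, previous-step nodal
values `w` and boundary data `p`, `q`. -/
def DiscreteStep (β μ : ℝ → ℝ) (h τ α : ℝ) (N : ℕ) (p q : ℝ) (w u : ℕ → ℝ) : Prop :=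
  (∀ i : ℕ, 1 ≤ i → i ≤ N - 1 →
      h / τ * (β (u i) - β (w i)) -
        (μ ((u (i + 1) - u i) / h) - μ ((u i - u (i - 1)) / h)) = 0) ∧
    h / (2 * τ) * (β (u 0) - β (w 0)) - μ ((u 1 - u 0) / h) + α * u 0 = α * p ∧
    h / (2 * τ) * (β (u N) - β (w N)) + μ ((u N - u (N - 1)) / h) + α * u N = α * q

set_option maxHeartbeats 1000000 in
/-- the implicit time step of the fully discrete scheme is uniquely
solvable: for any previous-step vector `w` and boundary values `p`, `q`, there is
exactly one vector `u ∈ ℝ^{N+1}` solving the nodal equations. -/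
theorem unique_solvability_of_implicit_step
    (ℓ α τ : ℝ) (hℓ : 0 < ℓ) (hα : 0 < α) (hτ : 0 < τ)
    (N : ℕ) (hN : 2 ≤ N) (h : ℝ) (hh : h = ℓ / N)
    (β : ℝ → ℝ) (hβc : Continuous β) (hβm : StrictMono β)
    (hB : Tendsto (fun u : ℝ => (∫ s in (0:ℝ)..u, β s) / |u|) (cocompact ℝ) atTop)
    (μ : ℝ → ℝ) (hμc : Continuous μ) (hμm : StrictMono μ) (hμ0 : μ 0 = 0)
    (w : ℕ → ℝ) (p q : ℝ) :
    ∃ u : ℕ → ℝ, DiscreteStep β μ h τ α N p q w u ∧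
      ∀ v : ℕ → ℝ, DiscreteStep β μ h τ α N p q w v → ∀ i ≤ N, v i = u i := by
  classical
  have hNpos : (0:ℝ) < (N:ℝ) := by
    have : (0:ℕ) < N := by omega
    exact_mod_cast this
  have hhpos : 0 < h := by rw [hh]; positivity
  have hτ2 : 0 < h / τ := by positivity
  have hτ0 : 0 < h / (2 * τ) := by positivity
  -- ## Uniqueness via discrete maximum principle
  have uniq_le : ∀ u v : ℕ → ℝ, DiscreteStep β μ h τ α N p q w u →
      DiscreteStep β μ h τ α N p q w v → ∀ i ≤ N, v i ≤ u i := by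
    intro u v hu hv
    by_contra hcon
    push_neg at hcon
    obtain ⟨i0, hi0N, hi0⟩ := hcon
    obtain ⟨k, hkmem, hkmax⟩ := Finset.exists_max_image (Finset.range (N+1))
      (fun i => v i - u i) ⟨0, by simp⟩
    rw [Finset.mem_range, Nat.lt_succ_iff] at hkmem
    have hkpos : 0 < v k - u k :=
      lt_of_lt_of_le (by linarith)
        (hkmax i0 (Finset.mem_range.2 (Nat.lt_succ_of_le hi0N)))
    have hβk : β (u k) < β (v k) := hβm (by linarith)
    have hmono := hμm.monotone
    rcases Nat.eq_zero_or_pos k with hk0 | hk1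
    · subst hk0
      have e1 : v 1 - u 1 ≤ v 0 - u 0 := hkmax 1 (Finset.mem_range.2 (by omega))
      have hδ : μ ((v 1 - v 0)/h) ≤ μ ((u 1 - u 0)/h) :=
        hmono (by apply div_le_div_of_nonneg_right ?_ hhpos.le; linarith)
      have hequ := hu.2.1
      have heqv := hv.2.1
      nlinarith [mul_pos hτ0 (sub_pos.2 hβk), mul_pos hα hkpos]
    rcases eq_or_lt_of_le hkmem with hkN | hkN
    · subst hkN
      have e1 : v (k-1) - u (k-1) ≤ v k - u k := hkmax (k-1) (Finset.mem_range.2 (by omega))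
      have hδ : μ ((u k - u (k-1))/h) ≤ μ ((v k - v (k-1))/h) :=
        hmono (by apply div_le_div_of_nonneg_right ?_ hhpos.le; linarith)
      have hequ := hu.2.2
      have heqv := hv.2.2
      nlinarith [mul_pos hτ0 (sub_pos.2 hβk), mul_pos hα hkpos]
    · -- interior
      have hequ := hu.1 k hk1 (by omega)
      have heqv := hv.1 k hk1 (by omega)
      have e1 : v (k+1) - u (k+1) ≤ v k - u k := hkmax (k+1) (Finset.mem_range.2 (by omega))
      have e2 : v (k-1) - u (k-1) ≤ v k - u k := hkmax (k-1) (Finset.mem_range.2 (by omega))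
      have hδ1 : μ ((v (k+1) - v k)/h) ≤ μ ((u (k+1) - u k)/h) :=
        hmono (by apply div_le_div_of_nonneg_right ?_ hhpos.le; linarith)
      have hδ2 : μ ((u k - u (k-1))/h) ≤ μ ((v k - v (k-1))/h) :=
        hmono (by apply div_le_div_of_nonneg_right ?_ hhpos.le; linarith)
      nlinarith [mul_pos hτ2 (sub_pos.2 hβk)]
  -- ## Existence via minimization of a convex functional
  set B : ℝ → ℝ := fun x => ∫ s in (0:ℝ)..x, β s with hBdef
  set M : ℝ → ℝ := fun x => ∫ s in (0:ℝ)..x, μ s with hMdef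
  have hBd : ∀ x, HasDerivAt B (β x) x := hasDerivAt_primitive' hβc
  have hMd : ∀ x, HasDerivAt M (μ x) x := hasDerivAt_primitive' hμc
  have hBcont : Continuous B := continuous_iff_continuousAt.2 fun x => (hBd x).continuousAt
  have hMcont : Continuous M := continuous_iff_continuousAt.2 fun x => (hMd x).continuousAt
  have hMnn : ∀ x, 0 ≤ M x := primitive_nonneg' hμm.monotone hμ0
  have hB' : Tendsto (fun x => B x / |x|) (cocompact ℝ) atTop := hB
  set c : ℕ → ℝ := fun i => if i = 0 ∨ i = N then h / (2*τ) else h / τ with hcdef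
  have hcpos : ∀ i, 0 < c i := by
    intro i
    by_cases hi : i = 0 ∨ i = N
    · exact lt_of_lt_of_eq hτ0 (if_pos hi).symm
    · exact lt_of_lt_of_eq hτ2 (if_neg hi).symm
  set J : (ℕ → ℝ) → ℝ := fun z =>
    (∑ i ∈ Finset.range (N+1), c i * (B (z i) - β (w i) * z i))
    + (∑ i ∈ Finset.range N, h * M ((z (i+1) - z i) / h))
    + (α * ((z 0)^2 / 2 - p * z 0) + α * ((z N)^2 / 2 - q * z N)) with hJdef
  have hJcont : Continuous J := by
    rw [hJdef]
    apply Continuous.add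
    apply Continuous.add
    · exact continuous_finset_sum _ fun i _ =>
        continuous_const.mul ((hBcont.comp (continuous_apply i)).sub
          (continuous_const.mul (continuous_apply i)))
    · exact continuous_finset_sum _ fun i _ =>
        continuous_const.mul (hMcont.comp
          (by fun_prop : Continuous fun z : ℕ → ℝ => (z (i+1) - z i) / h))
    · apply Continuous.add <;>
      exact continuous_const.mul ((((continuous_apply _).pow 2).div_const 2).sub
        (continuous_const.mul (continuous_apply _)))
  have hcoer : ∀ i : ℕ, Tendsto (fun x => c i * (B x - β (w i) * x)) (cocompact ℝ) atTop :=
    fun i => tendsto_coercive' hB' (c i) (β (w i)) (hcpos i)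
  have hfc : ∀ i : ℕ, Continuous (fun x => c i * (B x - β (w i) * x)) :=
    fun i => continuous_const.mul (hBcont.sub (continuous_const.mul continuous_id))
  have hlb : ∀ i : ℕ, ∃ mi : ℝ, ∀ x, mi ≤ c i * (B x - β (w i) * x) := by
    intro i
    obtain ⟨x0, hx0⟩ := (hfc i).exists_forall_le (hcoer i)
    exact ⟨_, hx0⟩
  choose m hm using hlb
  set T : ℝ := ∑ i ∈ Finset.range (N+1), min (m i) 0 with hTdef
  set bb : ℝ := J 0 + 1 - T + α * p^2/2 + α * q^2/2 with hbdef
  choose R hRpos hRspec using fun i : ℕ => exists_radius' (hcoer i) bb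
  set R₀ : ℝ := (Finset.range (N+1)).sup' ⟨0, by simp⟩ R with hR0def
  have hR0pos : 0 < R₀ :=
    lt_of_lt_of_le (hRpos 0) (Finset.le_sup' R (by simp))
  have hJlb : ∀ z : ℕ → ℝ,
      (∑ i ∈ Finset.range (N+1), c i * (B (z i) - β (w i) * z i))
        - α * p^2/2 - α * q^2/2 ≤ J z := by
    intro z
    have h2 : 0 ≤ ∑ i ∈ Finset.range N, h * M ((z (i+1) - z i)/h) :=
      Finset.sum_nonneg fun i _ => mul_nonneg hhpos.le (hMnn _)
    have h3 : -(α * p^2/2) ≤ α * ((z 0)^2/2 - p * z 0) := by nlinarith [sq_nonneg (z 0 - p)]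
    have h4 : -(α * q^2/2) ≤ α * ((z N)^2/2 - q * z N) := by nlinarith [sq_nonneg (z N - q)]
    rw [hJdef]
    dsimp only
    linarith
  have hkey : ∀ z : ℕ → ℝ, ∀ i₀, i₀ ≤ N → R₀ < |z i₀| → J 0 + 1 ≤ J z := by
    intro z i₀ hi₀ hz
    have hmem : i₀ ∈ Finset.range (N+1) := Finset.mem_range.2 (Nat.lt_succ_of_le hi₀)
    have hb1 : bb ≤ c i₀ * (B (z i₀) - β (w i₀) * z i₀) :=
      hRspec i₀ (z i₀) (lt_of_le_of_lt (Finset.le_sup' R hmem) hz)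
    have hsplit : ∑ i ∈ Finset.range (N+1), c i * (B (z i) - β (w i) * z i)
        = c i₀ * (B (z i₀) - β (w i₀) * z i₀)
          + ∑ i ∈ (Finset.range (N+1)).erase i₀, c i * (B (z i) - β (w i) * z i) :=
      (Finset.add_sum_erase _ _ hmem).symm
    have hsplitT : T = min (m i₀) 0
          + ∑ i ∈ (Finset.range (N+1)).erase i₀, min (m i) 0 :=
      (Finset.add_sum_erase _ _ hmem).symm
    have htail : ∑ i ∈ (Finset.range (N+1)).erase i₀, min (m i) 0
        ≤ ∑ i ∈ (Finset.range (N+1)).erase i₀, c i * (B (z i) - β (w i) * z i) :=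
      Finset.sum_le_sum fun i _ => le_trans (min_le_left _ _) (hm i (z i))
    have hminneg : min (m i₀) 0 ≤ 0 := min_le_right _ _
    have := hJlb z
    rw [hbdef] at hb1
    clear_value T J
    linarith
  set K : Set (ℕ → ℝ) := Set.pi Set.univ
    (fun i => if i ≤ N then Set.Icc (-R₀) R₀ else ({0} : Set ℝ)) with hKdef
  have hKcomp : IsCompact K := isCompact_univ_pi fun i => by
    split_ifs
    exacts [isCompact_Icc, isCompact_singleton]
  have h0K : (0 : ℕ → ℝ) ∈ K := by
    intro i _
    dsimp only
    split_ifs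
    · exact Set.mem_Icc.2 ⟨by simp; linarith, by simp; linarith⟩
    · simp
  obtain ⟨u, huK, humin'⟩ := hKcomp.exists_isMinOn ⟨0, h0K⟩ hJcont.continuousOn
  have humin : ∀ z ∈ K, J u ≤ J z := fun z hz => humin' hz
  have hmin : ∀ z, J u ≤ J z := by
    intro z
    by_cases hcase : ∀ i ≤ N, |z i| ≤ R₀
    · set z' : ℕ → ℝ := fun i => if i ≤ N then z i else 0 with hz'def
      have hz'K : z' ∈ K := by
        intro i _
        rw [hz'def]
        dsimp only
        split_ifs with hi
        · exact Set.mem_Icc.2 (abs_le.1 (hcase i hi))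
        · simp
      have hJz' : J z' = J z := by
        rw [hJdef]
        dsimp only
        congr 1
        congr 1
        · refine Finset.sum_congr rfl fun i hi => ?_
          have hiN : i ≤ N := Nat.lt_succ_iff.1 (Finset.mem_range.1 hi)
          rw [hz'def]; simp [hiN]
        · refine Finset.sum_congr rfl fun i hi => ?_
          have h1 : i ≤ N := le_of_lt (Finset.mem_range.1 hi)
          have h2 : i + 1 ≤ N := Finset.mem_range.1 hi
          rw [hz'def]; simp [h1, h2]
        · rw [hz'def]; simp
      calc J u ≤ J z' := humin z' hz'K
      _ = J z := hJz'
    · push_neg at hcase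
      obtain ⟨i₀, hi₀, hbig⟩ := hcase
      have hk := hkey z i₀ hi₀ hbig
      have h0 := humin 0 h0K
      linarith
  -- ## stationarity
  set d : ℕ → ℕ → ℝ := fun j i => if i = j then (1:ℝ) else 0 with hddef
  have stat : ∀ j, j ≤ N →
      (∑ i ∈ Finset.range (N+1), c i * (β (u i) * d j i - β (w i) * d j i))
      + (∑ i ∈ Finset.range N, h * (μ ((u (i+1) - u i)/h) * ((d j (i+1) - d j i)/h)))
      + (α * (2 * u 0 * d j 0 / 2 - p * d j 0) + α * (2 * u N * d j N / 2 - q * d j N)) = 0 := by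
    intro j hj
    have hval : ∀ i : ℕ, HasDerivAt (fun t : ℝ => u i + t * d j i) (d j i) 0 := by
      intro i
      simpa using ((hasDerivAt_id (0:ℝ)).mul_const (d j i)).const_add (u i)
    have hA : HasDerivAt (fun t => ∑ i ∈ Finset.range (N+1),
        c i * (B (u i + t * d j i) - β (w i) * (u i + t * d j i)))
        (∑ i ∈ Finset.range (N+1),
          c i * (β (u i + 0 * d j i) * d j i - β (w i) * d j i)) 0 :=
      HasDerivAt.fun_sum fun i _ =>
        ((((by simpa [Function.comp_def] using (hBd (u i + 0 * d j i)).comp (0:ℝ) (hval i)) :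
            HasDerivAt (fun t => B (u i + t * d j i)) (β (u i + 0 * d j i) * d j i) 0)).fun_sub
          ((hval i).const_mul (β (w i)))).const_mul (c i)
    have hBsum : HasDerivAt (fun t => ∑ i ∈ Finset.range N,
        h * M ((u (i+1) + t * d j (i+1) - (u i + t * d j i))/h))
        (∑ i ∈ Finset.range N,
          h * (μ ((u (i+1) + 0 * d j (i+1) - (u i + 0 * d j i))/h)
            * ((d j (i+1) - d j i)/h))) 0 :=
      HasDerivAt.fun_sum fun i _ =>
        ((hMd _).comp 0 (((hval (i+1)).sub (hval i)).div_const h)).const_mul h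
    have hq0 : HasDerivAt (fun t => α * ((u 0 + t * d j 0)^2/2 - p * (u 0 + t * d j 0)))
        (α * ((2:ℕ) * (u 0 + 0 * d j 0)^(2-1) * d j 0 / 2 - p * d j 0)) 0 :=
      ((((hval 0).pow 2).div_const 2).sub ((hval 0).const_mul p)).const_mul α
    have hqN : HasDerivAt (fun t => α * ((u N + t * d j N)^2/2 - q * (u N + t * d j N)))
        (α * ((2:ℕ) * (u N + 0 * d j N)^(2-1) * d j N / 2 - q * d j N)) 0 :=
      ((((hval N).pow 2).div_const 2).sub ((hval N).const_mul q)).const_mul α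
    have hφd := (hA.fun_add hBsum).fun_add (hq0.fun_add hqN)
    have hglob : ∀ t : ℝ, J (fun i => u i + 0 * d j i) ≤ J (fun i => u i + t * d j i) := by
      intro t
      have he : (fun i : ℕ => u i + 0 * d j i) = u := by funext i; ring
      rw [he]; exact hmin _
    have hlocal : IsLocalMin (fun t : ℝ => J (fun i => u i + t * d j i)) 0 :=
      Filter.Eventually.of_forall hglob
    have heq : (fun t : ℝ => J (fun i => u i + t * d j i))
        = fun t => (∑ i ∈ Finset.range (N+1),
            c i * (B (u i + t * d j i) - β (w i) * (u i + t * d j i)))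
          + (∑ i ∈ Finset.range N,
            h * M ((u (i+1) + t * d j (i+1) - (u i + t * d j i))/h))
          + (α * ((u 0 + t * d j 0)^2/2 - p * (u 0 + t * d j 0))
            + α * ((u N + t * d j N)^2/2 - q * (u N + t * d j N))) := by
      funext t
      rw [hJdef]
    rw [heq] at hlocal
    have hz := hlocal.deriv_eq_zero
    rw [hφd.deriv] at hz
    simp only [zero_mul, add_zero, pow_one, Nat.cast_ofNat] at hz
    linear_combination hz
  -- ## collapse the stationarity identities into the nodal equations
  have hne : h ≠ 0 := ne_of_gt hhpos
  have hrw : ∀ j k : ℕ, h * (μ ((u (k+1) - u k)/h) * ((d j (k+1) - d j k)/h))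
      = μ ((u (k+1) - u k)/h) * d j (k+1) - μ ((u (k+1) - u k)/h) * d j k := by
    intro j k
    field_simp
  have hS1 : ∀ j, 1 ≤ j → j ≤ N →
      ∑ k ∈ Finset.range N, μ ((u (k+1) - u k)/h) * d j (k+1)
        = μ ((u j - u (j-1))/h) := by
    intro j h1 h2
    rw [Finset.sum_eq_single_of_mem (j-1) (Finset.mem_range.2 (by omega))]
    · have hjj : j - 1 + 1 = j := by omega
      rw [hjj]
      simp [hddef]
    · intro k _ hk
      have hk' : ¬ (k + 1 = j) := by omega
      simp [hddef, hk']
  have hS1_0 : ∑ k ∈ Finset.range N, μ ((u (k+1) - u k)/h) * d 0 (k+1) = 0 := by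
    apply Finset.sum_eq_zero; intro k _
    simp [hddef]
  have hS2 : ∀ j, j < N →
      ∑ k ∈ Finset.range N, μ ((u (k+1) - u k)/h) * d j k
        = μ ((u (j+1) - u j)/h) := by
    intro j hj
    rw [Finset.sum_eq_single_of_mem j (Finset.mem_range.2 hj)]
    · simp [hddef]
    · intro k _ hk; simp [hddef, hk]
  have hS2_N : ∑ k ∈ Finset.range N, μ ((u (k+1) - u k)/h) * d N k = 0 := by
    apply Finset.sum_eq_zero; intro k hk
    have hk' : ¬ (k = N) := by have := Finset.mem_range.1 hk; omega
    simp [hddef, hk']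
  have hFirst : ∀ j, j ≤ N →
      ∑ i ∈ Finset.range (N+1), c i * (β (u i) * d j i - β (w i) * d j i)
        = c j * (β (u j) - β (w j)) := by
    intro j hj
    rw [Finset.sum_eq_single_of_mem j (Finset.mem_range.2 (by omega))]
    · simp [hddef]
    · intro k _ hk; simp [hddef, hk]
  have heq_int : ∀ i, 1 ≤ i → i ≤ N - 1 →
      h / τ * (β (u i) - β (w i)) -
        (μ ((u (i + 1) - u i) / h) - μ ((u i - u (i - 1)) / h)) = 0 := by
    intro i h1 h2
    have hs := stat i (by omega)
    rw [hFirst i (by omega)] at hs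
    rw [Finset.sum_congr rfl (fun k _ => hrw i k), Finset.sum_sub_distrib,
      hS1 i h1 (by omega), hS2 i (by omega)] at hs
    have hd0 : d i 0 = 0 := by simp [hddef]; omega
    have hdN : d i N = 0 := by simp [hddef]; omega
    rw [hd0, hdN] at hs
    have hci : c i = h / τ := if_neg (by omega)
    rw [hci] at hs
    linear_combination hs
  have heq_0 : h / (2 * τ) * (β (u 0) - β (w 0)) - μ ((u 1 - u 0) / h) + α * u 0 = α * p := by
    have hs := stat 0 (by omega)
    rw [hFirst 0 (by omega)] at hs
    rw [Finset.sum_congr rfl (fun k _ => hrw 0 k), Finset.sum_sub_distrib,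
      hS1_0, hS2 0 (by omega), show (0:ℕ)+1 = 1 from rfl] at hs
    have hd0 : d 0 0 = (1:ℝ) := by simp [hddef]
    have hdN : d 0 N = (0:ℝ) := by simp [hddef]; omega
    rw [hd0, hdN] at hs
    have hc0 : c 0 = h / (2*τ) := if_pos (Or.inl rfl)
    rw [hc0] at hs
    linear_combination hs
  have heq_N : h / (2 * τ) * (β (u N) - β (w N)) + μ ((u N - u (N - 1)) / h) + α * u N = α * q := by
    have hs := stat N le_rfl
    rw [hFirst N le_rfl] at hs
    rw [Finset.sum_congr rfl (fun k _ => hrw N k), Finset.sum_sub_distrib,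
      hS1 N (by omega) le_rfl, hS2_N] at hs
    have hd0 : d N 0 = (0:ℝ) := by simp [hddef]; omega
    have hdN : d N N = (1:ℝ) := by simp [hddef]
    rw [hd0, hdN] at hs
    have hcN : c N = h / (2*τ) := if_pos (Or.inr rfl)
    rw [hcN] at hs
    linear_combination hs
  have hu' : DiscreteStep β μ h τ α N p q w u := ⟨heq_int, heq_0, heq_N⟩
  exact ⟨u, hu', fun v hv i hi =>
    le_antisymm (uniq_le u v hu' hv i hi) (uniq_le v u hv hu' i hi)⟩
end

section
/- Discrete entropy dissipation: any discrete solution (u^k)_{k≥0} of the scheme satisfies, for every k ≥ 1, (E_h(u^k) − E_h(u^{k−1}))/τ ≤ −D(u^k) + α(u^k_0 p^k + u^k_N q^k), where E_h(v) = h(½e(v_0) + Σ_{i=1}^{N−1} e(v_i) + ½e(v_N)) with e(u) = u·β(u) − B(u), and D(v) = h Σ_{i=1}^{N} μ(δ_i)δ_i + α(v_0² + v_N²) with δ_i = (v_i − v_{i−1})/h. -/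
open Filter

/-- The entropy density `e(u) = u·β(u) - B(u)` with `B(u) = ∫₀ᵘ β(s) ds`. -/
noncomputable def entropyDensity (β : ℝ → ℝ) (u : ℝ) : ℝ :=
  u * β u - ∫ s in (0:ℝ)..u, β s

/-- The lumped (trapezoidal) discrete entropy
`E_h(v) = h (½ e(v₀) + ∑_{i=1}^{N-1} e(vᵢ) + ½ e(v_N))`. -/
noncomputable def discreteEntropy (β : ℝ → ℝ) (h : ℝ) (N : ℕ) (v : ℕ → ℝ) : ℝ :=
  h * ((1 / 2) * entropyDensity β (v 0) +
    (∑ i ∈ Finset.Ico 1 N, entropyDensity β (v i)) + (1 / 2) * entropyDensity β (v N))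

/-- The discrete dissipation functional
`D(v) = h ∑_{i=1}^N μ(δᵢ) δᵢ + α (v₀² + v_N²)` with `δᵢ = (vᵢ - vᵢ₋₁)/h`. -/
noncomputable def dissipation (μ : ℝ → ℝ) (h α : ℝ) (N : ℕ) (v : ℕ → ℝ) : ℝ :=
  h * (∑ i ∈ Finset.Icc 1 N, μ ((v i - v (i - 1)) / h) * ((v i - v (i - 1)) / h)) +
    α * (v 0 ^ 2 + v N ^ 2)

lemma entropy_convex (β : ℝ → ℝ) (hβc : Continuous β) (hβm : Monotone β) (w u : ℝ) :
    entropyDensity β u - entropyDensity β w ≤ u * (β u - β w) := by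
  have hint : (∫ s in (0:ℝ)..u, β s) - ∫ s in (0:ℝ)..w, β s = ∫ s in w..u, β s := by
    rw [intervalIntegral.integral_interval_sub_left (hβc.intervalIntegrable _ _)
      (hβc.intervalIntegrable _ _)]
  have key : (u - w) * β w ≤ ∫ s in w..u, β s := by
    rcases le_total w u with hwu | hwu
    · have := intervalIntegral.integral_mono_on hwu
        (intervalIntegrable_const : IntervalIntegrable _ MeasureTheory.volume _ _)
        (hβc.intervalIntegrable w u) (fun x hx => hβm hx.1)
      simpa using this
    · rw [intervalIntegral.integral_symm]
      have := intervalIntegral.integral_mono_on hwu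
        (hβc.intervalIntegrable u w)
        (intervalIntegrable_const : IntervalIntegrable _ MeasureTheory.volume _ _)
        (fun x hx => hβm hx.2)
      simp only [intervalIntegral.integral_const, smul_eq_mul] at this
      linarith
  simp only [entropyDensity]
  nlinarith [key, hint]

lemma abel_sum (g f : ℕ → ℝ) : ∀ N : ℕ, 1 ≤ N →
    ∑ i ∈ Finset.Ico 1 N, g i * (f (i + 1) - f i)
      = g N * f N - g 0 * f 1 - ∑ i ∈ Finset.Icc 1 N, f i * (g i - g (i - 1)) := by
  intro N
  induction N with
  | zero => omega
  | succ n ih =>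
    intro _
    rcases Nat.lt_or_ge 1 (n + 1) with h1 | h1
    · have hn : 1 ≤ n := by omega
      rw [Finset.sum_Ico_succ_top hn, Finset.sum_Icc_succ_top (by omega : 1 ≤ n + 1), ih hn]
      simp only [Nat.add_sub_cancel]
      ring
    · have hn0 : n = 0 := by omega
      subst hn0
      simp [Finset.Icc_self]
      ring

/-- discrete entropy dissipation inequality for discrete solutions. -/
theorem discrete_entropy_dissipation
    (ℓ α τ : ℝ) (hℓ : 0 < ℓ) (hα : 0 < α) (hτ : 0 < τ)
    (N : ℕ) (hN : 2 ≤ N) (h : ℝ) (hh : h = ℓ / N)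
    (β : ℝ → ℝ) (hβc : Continuous β) (hβm : StrictMono β)
    (hB : Tendsto (fun u : ℝ => (∫ s in (0:ℝ)..u, β s) / |u|) (cocompact ℝ) atTop)
    (μ : ℝ → ℝ) (hμc : Continuous μ) (hμm : StrictMono μ) (hμ0 : μ 0 = 0)
    (p q : ℕ → ℝ) (u : ℕ → ℕ → ℝ)
    (hu : ∀ k : ℕ, 1 ≤ k → DiscreteStep β μ h τ α N (p k) (q k) (u (k - 1)) (u k)) :
    ∀ k : ℕ, 1 ≤ k →
      (discreteEntropy β h N (u k) - discreteEntropy β h N (u (k - 1))) / τ ≤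
        -dissipation μ h α N (u k) + α * (u k 0 * p k + u k N * q k) := by
  intro k hk
  obtain ⟨hint, h0eq, hNeq⟩ := hu k hk
  set v : ℕ → ℝ := u k with hv
  set w : ℕ → ℝ := u (k - 1) with hw
  have hNR : (2:ℝ) ≤ (N:ℝ) := by exact_mod_cast hN
  have hhpos : 0 < h := by
    rw [hh]; apply div_pos hℓ; linarith
  have hhne : h ≠ 0 := ne_of_gt hhpos
  have hτne : τ ≠ 0 := ne_of_gt hτ
  set f : ℕ → ℝ := fun i => μ ((v i - v (i - 1)) / h) with hf
  have hf1 : μ ((v 1 - v 0) / h) = f 1 := by simp [hf]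
  have hfs : ∀ i : ℕ, μ ((v (i + 1) - v i) / h) = f (i + 1) := fun i => by simp [hf]
  -- rewritten nodal equations
  have h0' : h * (β (v 0) - β (w 0)) = 2 * τ * (f 1 - α * v 0 + α * p k) := by
    rw [hf1] at h0eq
    have hA : h / (2 * τ) * (β (v 0) - β (w 0)) = f 1 - α * v 0 + α * p k := by linarith
    rw [← hA]; field_simp
  have hN' : h * (β (v N) - β (w N)) = 2 * τ * (-(f N) - α * v N + α * q k) := by
    have hA : h / (2 * τ) * (β (v N) - β (w N)) = -(f N) - α * v N + α * q k := by
      simp only [hf]; linarith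
    rw [← hA]; field_simp
  have hint' : ∀ i ∈ Finset.Ico 1 N, h * (β (v i) - β (w i)) = τ * (f (i + 1) - f i) := by
    intro i hi
    rw [Finset.mem_Ico] at hi
    have := hint i hi.1 (by omega)
    rw [hfs i] at this
    have hA : h / τ * (β (v i) - β (w i)) = f (i + 1) - f i := by
      simp only [hf]; linarith
    rw [← hA]; field_simp
  -- entropy estimate
  have hconv := fun a b => entropy_convex β hβc hβm.monotone a b
  have hsum3 : h * ∑ i ∈ Finset.Ico 1 N, v i * (β (v i) - β (w i))
      = τ * ∑ i ∈ Finset.Ico 1 N, v i * (f (i + 1) - f i) := by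
    rw [Finset.mul_sum, Finset.mul_sum]
    refine Finset.sum_congr rfl fun i hi => ?_
    linear_combination v i * hint' i hi
  have hE : discreteEntropy β h N v - discreteEntropy β h N w ≤
      τ * (v 0 * (f 1 - α * v 0 + α * p k)
        + (∑ i ∈ Finset.Ico 1 N, v i * (f (i + 1) - f i))
        + v N * (-(f N) - α * v N + α * q k)) := by
    calc discreteEntropy β h N v - discreteEntropy β h N w
        = h * ((1 / 2) * (entropyDensity β (v 0) - entropyDensity β (w 0))
          + (∑ i ∈ Finset.Ico 1 N, (entropyDensity β (v i) - entropyDensity β (w i)))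
          + (1 / 2) * (entropyDensity β (v N) - entropyDensity β (w N))) := by
          simp only [discreteEntropy]
          rw [Finset.sum_sub_distrib]
          ring
      _ ≤ h * ((1 / 2) * (v 0 * (β (v 0) - β (w 0)))
          + (∑ i ∈ Finset.Ico 1 N, v i * (β (v i) - β (w i)))
          + (1 / 2) * (v N * (β (v N) - β (w N)))) := by
          apply mul_le_mul_of_nonneg_left _ hhpos.le
          have hs : ∑ i ∈ Finset.Ico 1 N, (entropyDensity β (v i) - entropyDensity β (w i))
              ≤ ∑ i ∈ Finset.Ico 1 N, v i * (β (v i) - β (w i)) :=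
            Finset.sum_le_sum fun i _ => hconv (w i) (v i)
          linarith [hconv (w 0) (v 0), hconv (w N) (v N), hs]
      _ = τ * (v 0 * (f 1 - α * v 0 + α * p k)
          + (∑ i ∈ Finset.Ico 1 N, v i * (f (i + 1) - f i))
          + v N * (-(f N) - α * v N + α * q k)) := by
          linear_combination (v 0 / 2) * h0' + (v N / 2) * hN' + hsum3
  -- Abel summation and conclusion
  have habel := abel_sum v f N (by omega)
  have hdis : ∑ i ∈ Finset.Icc 1 N, f i * (v i - v (i - 1))
      = h * ∑ i ∈ Finset.Icc 1 N, μ ((v i - v (i - 1)) / h) * ((v i - v (i - 1)) / h) := by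
    rw [Finset.mul_sum]
    refine Finset.sum_congr rfl fun i _ => ?_
    simp only [hf]
    field_simp
  rw [div_le_iff₀ hτ]
  calc discreteEntropy β h N v - discreteEntropy β h N w
      ≤ τ * (v 0 * (f 1 - α * v 0 + α * p k)
        + (∑ i ∈ Finset.Ico 1 N, v i * (f (i + 1) - f i))
        + v N * (-(f N) - α * v N + α * q k)) := hE
    _ = (-dissipation μ h α N v + α * (v 0 * p k + v N * q k)) * τ := by
        rw [habel, hdis]
        simp only [dissipation]
        ring
end

section
/- Discrete maximum principle: if 0 < u̲ ≤ u^0_i ≤ ū for all 0 ≤ i ≤ N and u̲ ≤ p^k, q^k ≤ ū for all k ≥ 1, then every discrete solution (u^k)_{k≥0} of the scheme satisfies u̲ ≤ u^k_i ≤ ū for all k ≥ 0 and all 0 ≤ i ≤ N. -/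
open Filter

lemma step_upper (β μ : ℝ → ℝ) (hβm : StrictMono β)
    (hμ1 : ∀ s : ℝ, s ≤ 0 → μ s ≤ 0) (hμ2 : ∀ s : ℝ, 0 ≤ s → 0 ≤ μ s)
    (h τ α : ℝ) (hh : 0 < h) (hτ : 0 < τ) (hα : 0 < α)
    (N : ℕ) (hN : 2 ≤ N) (p q U : ℝ) (hp' : p ≤ U) (hq' : q ≤ U)
    (w u : ℕ → ℝ) (hw : ∀ i ≤ N, w i ≤ U)
    (hs : DiscreteStep β μ h τ α N p q w u) :
    ∀ i ≤ N, u i ≤ U := by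
  obtain ⟨hint, hbc0, hbcN⟩ := hs
  obtain ⟨i0, hi0mem, hmax⟩ := Finset.exists_max_image (Finset.range (N + 1)) u
    ⟨0, Finset.mem_range.2 (by omega)⟩
  have hi0 : i0 ≤ N := by
    have := Finset.mem_range.1 hi0mem; omega
  have hmax' : ∀ j ≤ N, u j ≤ u i0 := fun j hj =>
    hmax j (Finset.mem_range.2 (by omega))
  intro i hi
  have hui : u i ≤ u i0 := hmax' i hi
  suffices hM : u i0 ≤ U by linarith
  by_contra hM
  push_neg at hM
  have hβpos : 0 < β (u i0) - β (w i0) :=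
    sub_pos.2 (hβm (lt_of_le_of_lt (hw i0 hi0) hM))
  rcases eq_or_ne i0 0 with h0 | h0
  · -- left boundary
    subst h0
    have h1 : u 1 ≤ u 0 := hmax' 1 (by omega)
    have hμle : μ ((u 1 - u 0) / h) ≤ 0 :=
      hμ1 _ (div_nonpos_of_nonpos_of_nonneg (by linarith) hh.le)
    have hcoef : 0 < h / (2 * τ) := by positivity
    have := mul_pos hcoef hβpos
    nlinarith [mul_le_mul_of_nonneg_left hp' hα.le, mul_lt_mul_of_pos_left hM hα]
  rcases eq_or_ne i0 N with hNn | hNn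
  · -- right boundary
    subst hNn
    have h1 : u (i0 - 1) ≤ u i0 := hmax' (i0 - 1) (by omega)
    have hμge : 0 ≤ μ ((u i0 - u (i0 - 1)) / h) :=
      hμ2 _ (div_nonneg (by linarith) hh.le)
    have hcoef : 0 < h / (2 * τ) := by positivity
    have := mul_pos hcoef hβpos
    nlinarith [mul_le_mul_of_nonneg_left hq' hα.le, mul_lt_mul_of_pos_left hM hα]
  · -- interior
    have h1 : 1 ≤ i0 := by omega
    have h2 : i0 ≤ N - 1 := by omega
    have e := hint i0 h1 h2
    have hp1 : u (i0 + 1) ≤ u i0 := hmax' (i0 + 1) (by omega)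
    have hm1 : u (i0 - 1) ≤ u i0 := hmax' (i0 - 1) (by omega)
    have hμle : μ ((u (i0 + 1) - u i0) / h) ≤ 0 :=
      hμ1 _ (div_nonpos_of_nonpos_of_nonneg (by linarith) hh.le)
    have hμge : 0 ≤ μ ((u i0 - u (i0 - 1)) / h) :=
      hμ2 _ (div_nonneg (by linarith) hh.le)
    have hcoef : 0 < h / τ := by positivity
    nlinarith [mul_pos hcoef hβpos]

lemma step_bound (β μ : ℝ → ℝ) (hβm : StrictMono β)
    (hμ1 : ∀ s : ℝ, s ≤ 0 → μ s ≤ 0) (hμ2 : ∀ s : ℝ, 0 ≤ s → 0 ≤ μ s)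
    (h τ α : ℝ) (hh : 0 < h) (hτ : 0 < τ) (hα : 0 < α)
    (N : ℕ) (hN : 2 ≤ N) (p q l U : ℝ)
    (hp : l ≤ p) (hp' : p ≤ U) (hq : l ≤ q) (hq' : q ≤ U)
    (w u : ℕ → ℝ) (hw : ∀ i ≤ N, l ≤ w i ∧ w i ≤ U)
    (hs : DiscreteStep β μ h τ α N p q w u) :
    ∀ i ≤ N, l ≤ u i ∧ u i ≤ U := by
  have hupper := step_upper β μ hβm hμ1 hμ2 h τ α hh hτ hα N hN p q U hp' hq'
    w u (fun i hi => (hw i hi).2) hs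
  -- lower bound by symmetry
  set β' : ℝ → ℝ := fun x => -β (-x) with hβ'def
  set μ' : ℝ → ℝ := fun s => -μ (-s) with hμ'def
  have hβ'm : StrictMono β' := fun x y hxy => by
    simp only [hβ'def]
    exact neg_lt_neg (hβm (neg_lt_neg hxy))
  have hμ'1 : ∀ s : ℝ, s ≤ 0 → μ' s ≤ 0 := fun s hs => by
    simp only [hμ'def]
    have := hμ2 (-s) (by linarith)
    linarith
  have hμ'2 : ∀ s : ℝ, 0 ≤ s → 0 ≤ μ' s := fun s hs => by
    simp only [hμ'def]
    have := hμ1 (-s) (by linarith)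
    linarith
  obtain ⟨hint, hbc0, hbcN⟩ := hs
  have hs' : DiscreteStep β' μ' h τ α N (-p) (-q) (fun i => -w i) (fun i => -u i) := by
    refine ⟨fun i h1 h2 => ?_, ?_, ?_⟩
    · have e := hint i h1 h2
      have k1 : (-u (i + 1) - -u i) / h = -((u (i + 1) - u i) / h) := by ring
      have k2 : (-u i - -u (i - 1)) / h = -((u i - u (i - 1)) / h) := by ring
      simp only [hβ'def, hμ'def, k1, k2, neg_neg]
      linarith
    · have k1 : (-u 1 - -u 0) / h = -((u 1 - u 0) / h) := by ring
      simp only [hβ'def, hμ'def, k1, neg_neg]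
      linarith
    · have k1 : (-u N - -u (N - 1)) / h = -((u N - u (N - 1)) / h) := by ring
      simp only [hβ'def, hμ'def, k1, neg_neg]
      linarith
  have hlower := step_upper β' μ' hβ'm hμ'1 hμ'2 h τ α hh hτ hα N hN (-p) (-q) (-l)
    (by linarith) (by linarith) (fun i => -w i) (fun i => -u i)
    (fun i hi => by simpa using (hw i hi).1) hs'
  intro i hi
  refine ⟨?_, hupper i hi⟩
  have := hlower i hi
  simpa using this

/-- discrete maximum principle. If the initial nodal values and the
boundary data lie in `[u̲, ū]` with `0 < u̲ ≤ ū`, then all nodal values of every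
discrete solution remain in `[u̲, ū]` for all times. -/
theorem discrete_maximum_principle
    (ℓ α τ : ℝ) (hℓ : 0 < ℓ) (hα : 0 < α) (hτ : 0 < τ)
    (N : ℕ) (hN : 2 ≤ N) (h : ℝ) (hh : h = ℓ / N)
    (β : ℝ → ℝ) (hβc : Continuous β) (hβm : StrictMono β)
    (hβd : ∀ x : ℝ, x ≠ 0 → DifferentiableAt ℝ β x)
    (hβ' : ∀ x : ℝ, x ≠ 0 → 0 < deriv β x)
    (hB : Tendsto (fun u : ℝ => (∫ s in (0:ℝ)..u, β s) / |u|) (cocompact ℝ) atTop)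
    (μ : ℝ → ℝ) (hμc : Continuous μ) (hμ0 : μ 0 = 0)
    (hμd : ∀ s : ℝ, s ≠ 0 → DifferentiableAt ℝ μ s)
    (hμ' : ∀ s : ℝ, s ≠ 0 → 0 < deriv μ s)
    (ulow uup : ℝ) (hul : 0 < ulow) (hbnd : ulow ≤ uup)
    (p q : ℕ → ℝ) (u : ℕ → ℕ → ℝ)
    (hu : ∀ k : ℕ, 1 ≤ k → DiscreteStep β μ h τ α N (p k) (q k) (u (k - 1)) (u k))
    (hinit : ∀ i ≤ N, ulow ≤ u 0 i ∧ u 0 i ≤ uup)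
    (hpq : ∀ k : ℕ, 1 ≤ k → (ulow ≤ p k ∧ p k ≤ uup) ∧ (ulow ≤ q k ∧ q k ≤ uup)) :
    ∀ k : ℕ, ∀ i ≤ N, ulow ≤ u k i ∧ u k i ≤ uup := by
  have hhpos : 0 < h := by
    rw [hh]
    have : (0:ℝ) < N := by exact_mod_cast (by omega : 0 < N)
    positivity
  -- sign properties of μ
  have hmono1 : StrictMonoOn μ (Set.Iic (0:ℝ)) := by
    apply strictMonoOn_of_deriv_pos (convex_Iic 0) hμc.continuousOn
    intro x hx
    rw [interior_Iic] at hx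
    exact hμ' x (ne_of_lt hx)
  have hmono2 : StrictMonoOn μ (Set.Ici (0:ℝ)) := by
    apply strictMonoOn_of_deriv_pos (convex_Ici 0) hμc.continuousOn
    intro x hx
    rw [interior_Ici] at hx
    exact hμ' x (ne_of_gt hx)
  have hμ1 : ∀ s : ℝ, s ≤ 0 → μ s ≤ 0 := by
    intro s hs
    rcases eq_or_lt_of_le hs with rfl | hs'
    · exact le_of_eq hμ0
    · have := hmono1 (Set.mem_Iic.2 hs) (Set.mem_Iic.2 le_rfl) hs'
      linarith [hμ0 ▸ this]
  have hμ2 : ∀ s : ℝ, 0 ≤ s → 0 ≤ μ s := by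
    intro s hs
    rcases eq_or_lt_of_le hs with rfl | hs'
    · exact ge_of_eq hμ0
    · have := hmono2 (Set.mem_Ici.2 le_rfl) (Set.mem_Ici.2 hs) hs'
      linarith [hμ0 ▸ this]
  intro k
  induction k with
  | zero => exact hinit
  | succ n ih =>
    have hk : 1 ≤ n + 1 := by omega
    have hstep := hu (n + 1) hk
    simp only [Nat.add_sub_cancel] at hstep
    obtain ⟨⟨hp1, hp2⟩, ⟨hq1, hq2⟩⟩ := hpq (n + 1) hk
    exact step_bound β μ hβm hμ1 hμ2 h τ α hhpos hτ hα N hN (p (n + 1)) (q (n + 1))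
      ulow uup hp1 hp2 hq1 hq2 (u n) (u (n + 1)) ih hstep
end

section
/- Uniform bound on discrete time derivatives: there exists a constant C > 0, depending only on ℓ, α, T, β, μ, u̲, ū and the Lipschitz constants of u₀ and u_∂, but not on N or τ, such that for every integer N ≥ 2, every τ ∈ (0,T), and every discrete solution (u^k) of the scheme with u^0_i = u₀(ih), p^k = u_∂(t^k,0), q^k = u_∂(t^k,ℓ), one has Σ_{k ≥ 1, t^k ≤ T} τ·‖(u^k − u^{k−1})/τ‖² ≤ C, where ‖v‖² = Σ_{i=0}^{N−1} (h/3)(v_i² + v_i v_{i+1} + v_{i+1}²) is the squared L²(0,ℓ) norm of the piecewise linear interpolant of v. -/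
open Filter

/-- Squared `L²(0,ℓ)` norm of the continuous piecewise linear interpolant of the
nodal vector `v` on a uniform grid of `N + 1` points with spacing `h`. -/
noncomputable def normSq (h : ℝ) (N : ℕ) (v : ℕ → ℝ) : ℝ :=
  ∑ i ∈ Finset.range N, h / 3 * (v i ^ 2 + v i * v (i + 1) + v (i + 1) ^ 2)


open Filter Finset

/-- Abel summation identity used in the energy estimate. -/
lemma abel_identity (g Δ : ℕ → ℝ) : ∀ N : ℕ, 1 ≤ N →
    ∑ i ∈ Finset.Icc 1 (N - 1), (g (i + 1) - g i) * Δ i + g 1 * Δ 0 - g N * Δ N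
      = ∑ j ∈ Finset.Icc 1 N, g j * (Δ (j - 1) - Δ j) := by
  intro N hN
  induction N, hN using Nat.le_induction with
  | base => simp [Finset.Icc_self]; ring
  | succ n hn ih =>
    obtain ⟨m, rfl⟩ : ∃ m, n = m + 1 := ⟨n - 1, by omega⟩
    have e2 : ∑ i ∈ Finset.Icc 1 (m + 1 + 1 - 1), (g (i + 1) - g i) * Δ i
        = ∑ i ∈ Finset.Icc 1 (m + 1 - 1), (g (i + 1) - g i) * Δ i
          + (g (m + 1 + 1) - g (m + 1)) * Δ (m + 1) := by
      have : (m + 1 + 1 : ℕ) - 1 = m + 1 := rfl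
      rw [this, Finset.sum_Icc_succ_top (by omega : (1:ℕ) ≤ m + 1)]
      have h2 : (m + 1 : ℕ) - 1 = m := rfl
      rw [h2]
    have e3 : ∑ j ∈ Finset.Icc 1 (m + 1 + 1), g j * (Δ (j - 1) - Δ j)
        = ∑ j ∈ Finset.Icc 1 (m + 1), g j * (Δ (j - 1) - Δ j)
          + g (m + 1 + 1) * (Δ (m + 1) - Δ (m + 1 + 1)) := by
      rw [Finset.sum_Icc_succ_top (by omega : (1:ℕ) ≤ m + 1 + 1)]
      simp
    rw [e2, e3, ← ih]
    ring

/-- Splitting of the lumped sum. -/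
lemma lumped_split (f : ℕ → ℝ) : ∀ N : ℕ, 1 ≤ N →
    ∑ i ∈ Finset.range N, (f i + f (i + 1))
      = 2 * ∑ i ∈ Finset.Icc 1 (N - 1), f i + f 0 + f N := by
  intro N hN
  induction N, hN using Nat.le_induction with
  | base => simp
  | succ n hn ih =>
    obtain ⟨m, rfl⟩ : ∃ m, n = m + 1 := ⟨n - 1, by omega⟩
    rw [Finset.sum_range_succ, ih]
    have e1 : (m + 1 + 1 : ℕ) - 1 = m + 1 := rfl
    have e2 : (m + 1 + 0 : ℕ) - 1 = m := rfl
    rw [e1]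
    rw [Finset.sum_Icc_succ_top (by omega : (1:ℕ) ≤ m + 1) f]
    have : (m + 1 : ℕ) - 1 = m := rfl
    rw [this]
    ring

/-- Telescoping sum over `Icc 1 K`. -/
lemma telescope_Icc (F : ℕ → ℝ) : ∀ K : ℕ,
    ∑ k ∈ Finset.Icc 1 K, (F (k - 1) - F k) = F 0 - F K := by
  intro K
  induction K with
  | zero => simp
  | succ n ih =>
    rw [Finset.sum_Icc_succ_top (by omega : (1:ℕ) ≤ n + 1), ih]
    simp

open Filter Finset

section analytic
variable (μ : ℝ → ℝ)

lemma mono_of_deriv (hμc : Continuous μ)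
    (hμd : ∀ s : ℝ, s ≠ 0 → DifferentiableAt ℝ μ s)
    (hμ' : ∀ s : ℝ, s ≠ 0 → 0 < deriv μ s) : Monotone μ := by
  have h1 : StrictMonoOn μ (Set.Iic 0) := by
    apply strictMonoOn_of_deriv_pos (convex_Iic 0) hμc.continuousOn
    intro x hx
    rw [interior_Iic] at hx
    exact hμ' x (ne_of_lt hx)
  have h2 : StrictMonoOn μ (Set.Ici 0) := by
    apply strictMonoOn_of_deriv_pos (convex_Ici 0) hμc.continuousOn
    intro x hx
    rw [interior_Ici] at hx
    exact hμ' x (ne_of_gt hx)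
  intro a b hab
  rcases le_total b 0 with hb | hb
  · rcases eq_or_lt_of_le hab with h | h
    · exact le_of_eq (congrArg μ h)
    · exact le_of_lt (h1 (Set.mem_Iic.mpr (le_trans hab hb)) (Set.mem_Iic.mpr hb) h)
  · rcases le_total a 0 with ha | ha
    · calc μ a ≤ μ 0 := by
            rcases eq_or_lt_of_le ha with h | h
            · exact le_of_eq (congrArg μ h)
            · exact le_of_lt (h1 (Set.mem_Iic.mpr ha) (Set.mem_Iic.mpr le_rfl) h)
        _ ≤ μ b := by
            rcases eq_or_lt_of_le hb with h | h
            · exact le_of_eq (congrArg μ h)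
            · exact le_of_lt (h2 (Set.mem_Ici.mpr le_rfl) (Set.mem_Ici.mpr hb) h)
    · rcases eq_or_lt_of_le hab with h | h
      · exact le_of_eq (congrArg μ h)
      · exact le_of_lt (h2 (Set.mem_Ici.mpr ha) (Set.mem_Ici.mpr (le_trans ha hab)) h)

end analytic

section Mlem

noncomputable def Mfun (μ : ℝ → ℝ) (s : ℝ) : ℝ := ∫ t in (0:ℝ)..s, μ t

lemma Mfun_nonneg (μ : ℝ → ℝ) (hμc : Continuous μ) (hμmono : Monotone μ) (hμ0 : μ 0 = 0) (s : ℝ) :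
    0 ≤ Mfun μ s := by
  unfold Mfun
  rcases le_total 0 s with hs | hs
  · apply intervalIntegral.integral_nonneg hs
    intro x hx
    calc (0:ℝ) = μ 0 := hμ0.symm
    _ ≤ μ x := hμmono hx.1
  · rw [intervalIntegral.integral_symm s 0]
    simp only [neg_nonneg]
    have h1 : ∫ t in s..(0:ℝ), μ t ≤ ∫ t in s..(0:ℝ), (0:ℝ) := by
      apply intervalIntegral.integral_mono_on hs (hμc.intervalIntegrable s 0)
        intervalIntegrable_const
      intro x hx
      calc μ x ≤ μ 0 := hμmono hx.2
      _ = 0 := hμ0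
    simpa using h1

lemma Mfun_convex_ineq (μ : ℝ → ℝ) (hμc : Continuous μ) (hμmono : Monotone μ)
    (a b : ℝ) : Mfun μ a - Mfun μ b ≤ μ a * (a - b) := by
  have hint : ∀ x y : ℝ, IntervalIntegrable μ MeasureTheory.volume x y :=
    fun x y => hμc.intervalIntegrable x y
  have key : Mfun μ a - Mfun μ b = ∫ t in b..a, μ t := by
    unfold Mfun
    rw [intervalIntegral.integral_interval_sub_left (hint 0 a) (hint 0 b)]
  rw [key]
  rcases le_total b a with hab | hab
  · have h1 : ∫ t in b..a, μ t ≤ ∫ t in b..a, μ a := by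
      apply intervalIntegral.integral_mono_on hab (hint b a) (intervalIntegrable_const)
      intro x hx; exact hμmono hx.2
    rw [intervalIntegral.integral_const, smul_eq_mul] at h1
    nlinarith [h1]
  · rw [intervalIntegral.integral_symm a b]
    have h1 : ∫ t in a..b, μ a ≤ ∫ t in a..b, μ t := by
      apply intervalIntegral.integral_mono_on hab (intervalIntegrable_const) (hint a b)
      intro x hx; exact hμmono hx.1
    rw [intervalIntegral.integral_const, smul_eq_mul] at h1
    nlinarith [h1]

lemma Mfun_bound (μ : ℝ → ℝ) (hμmono : Monotone μ) (K : ℝ) (hK : 0 ≤ K)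
    (s : ℝ) (hs : |s| ≤ K) :
    Mfun μ s ≤ (|μ K| + |μ (-K)|) * K := by
  have hb : ∀ x ∈ Set.uIoc (0:ℝ) s, ‖μ x‖ ≤ |μ K| + |μ (-K)| := by
    intro x hx
    have hx1 : -K ≤ x ∧ x ≤ K := by
      rcases le_total 0 s with h | h
      · rw [Set.uIoc_of_le h] at hx
        constructor <;> [linarith [hx.1, abs_le.mp hs]; linarith [hx.2, (abs_le.mp hs).2]]
      · rw [Set.uIoc_of_ge h] at hx
        constructor <;> [linarith [hx.1, (abs_le.mp hs).1]; linarith [hx.2]]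
    have h1 : μ x ≤ μ K := hμmono hx1.2
    have h2 : μ (-K) ≤ μ x := hμmono hx1.1
    rw [Real.norm_eq_abs, abs_le]
    constructor
    · have := neg_abs_le (μ (-K)); have := abs_nonneg (μ K); linarith
    · have := le_abs_self (μ K); have := abs_nonneg (μ (-K)); linarith
  have hnc := intervalIntegral.norm_integral_le_of_norm_le_const (C := |μ K| + |μ (-K)|) hb
  unfold Mfun
  have h2 : |s - 0| ≤ K := by simpa using hs
  calc ∫ t in (0:ℝ)..s, μ t ≤ ‖∫ t in (0:ℝ)..s, μ t‖ := le_abs_self _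
    _ ≤ (|μ K| + |μ (-K)|) * |s - 0| := hnc
    _ ≤ (|μ K| + |μ (-K)|) * K := by
        apply mul_le_mul_of_nonneg_left h2
        positivity

end Mlem

lemma exists_slope_const (β : ℝ → ℝ) (hβc : Continuous β)
    (hβd : ∀ x : ℝ, 0 < x → DifferentiableAt ℝ β x)
    (hβdc : ContinuousOn (deriv β) (Set.Ioi 0))
    (hβ' : ∀ x : ℝ, 0 < x → 0 < deriv β x)
    (ulow uup : ℝ) (hul : 0 < ulow) (hbnd : ulow ≤ uup) :
    ∃ c : ℝ, 0 < c ∧ ∀ x y : ℝ, ulow ≤ x → x ≤ uup → ulow ≤ y → y ≤ uup →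
      c * (x - y) ^ 2 ≤ (β x - β y) * (x - y) := by
  have hsub : Set.Icc ulow uup ⊆ Set.Ioi 0 := fun z hz => lt_of_lt_of_le hul hz.1
  have hcomp : IsCompact (Set.Icc ulow uup) := isCompact_Icc
  have hne : (Set.Icc ulow uup).Nonempty := Set.nonempty_Icc.mpr hbnd
  obtain ⟨x₀, hx₀mem, hx₀min⟩ :=
    hcomp.exists_isMinOn hne (hβdc.mono hsub)
  set c := deriv β x₀ with hc
  have hcpos : 0 < c := hβ' x₀ (hsub hx₀mem)
  refine ⟨c, hcpos, ?_⟩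
  have key : ∀ x y : ℝ, ulow ≤ x → x ≤ uup → ulow ≤ y → y ≤ uup → y < x →
      c * (x - y) ^ 2 ≤ (β x - β y) * (x - y) := by
    intro x y hx1 hx2 hy1 hy2 hyx
    obtain ⟨ξ, hξmem, hξ⟩ := exists_hasDerivAt_eq_slope β (deriv β) hyx
      (hβc.continuousOn)
      (fun z hz => (hβd z (lt_of_lt_of_le hul (le_trans hy1 hz.1.le))).hasDerivAt)
    have hξIcc : ξ ∈ Set.Icc ulow uup :=
      ⟨le_trans hy1 hξmem.1.le, le_trans hξmem.2.le hx2⟩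
    have hcle : c ≤ deriv β ξ := hx₀min hξIcc
    have hxy : 0 < x - y := by linarith
    have : β x - β y = deriv β ξ * (x - y) := by
      field_simp at hξ
      linarith [hξ]
    rw [this]
    nlinarith [hcle, hxy]
  intro x y hx1 hx2 hy1 hy2
  rcases lt_trichotomy y x with h | h | h
  · exact key x y hx1 hx2 hy1 hy2 h
  · subst h; simp
  · have := key y x hy1 hy2 hx1 hx2 h
    nlinarith [this]

lemma max_principle (β μ : ℝ → ℝ) (hβm : StrictMono β) (hμmono : Monotone μ)
    (hμ0 : μ 0 = 0) (h τ α : ℝ) (hh : 0 < h) (hτ : 0 < τ) (hα : 0 < α)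
    (N : ℕ) (hN : 1 ≤ N) (p q ulow uup : ℝ)
    (hp1 : ulow ≤ p) (hp2 : p ≤ uup) (hq1 : ulow ≤ q) (hq2 : q ≤ uup)
    (w v : ℕ → ℝ) (hstep : DiscreteStep β μ h τ α N p q w v)
    (hwb : ∀ i ≤ N, ulow ≤ w i ∧ w i ≤ uup) :
    ∀ i ≤ N, ulow ≤ v i ∧ v i ≤ uup := by
  obtain ⟨eqI, eq0, eqN⟩ := hstep
  have h2τ : 0 < h / (2 * τ) := by positivity
  have hhτ : 0 < h / τ := by positivity
  -- upper bound
  have hupper : ∀ i ≤ N, v i ≤ uup := by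
    obtain ⟨im, himmem, hmax⟩ := Finset.exists_max_image (Finset.range (N + 1)) v
      ⟨0, Finset.mem_range.mpr (Nat.succ_pos N)⟩
    have him : im ≤ N := Nat.lt_succ_iff.mp (Finset.mem_range.mp himmem)
    have hub : v im ≤ uup := by
      by_contra hgt
      push_neg at hgt
      rcases Nat.eq_zero_or_pos im with h0 | hpos
      · -- im = 0
        subst h0
        have h1 : v 1 ≤ v 0 := hmax 1 (Finset.mem_range.mpr (by omega))
        have hμ1 : μ ((v 1 - v 0) / h) ≤ 0 := by
          have : (v 1 - v 0) / h ≤ 0 := div_nonpos_of_nonpos_of_nonneg (by linarith) hh.le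
          calc μ ((v 1 - v 0) / h) ≤ μ 0 := hμmono this
          _ = 0 := hμ0
        have hβgt : β (w 0) < β (v 0) :=
          hβm (lt_of_le_of_lt (hwb 0 (by omega)).2 hgt)
        have hA : 0 < h / (2 * τ) * (β (v 0) - β (w 0)) :=
          mul_pos h2τ (by linarith)
        have hB : α * p ≤ α * uup := mul_le_mul_of_nonneg_left hp2 hα.le
        have hC : α * uup < α * v 0 := mul_lt_mul_of_pos_left hgt hα
        linarith [eq0]
      · rcases Nat.lt_or_ge im N with hlt | hge
        · -- interior
          have heq := eqI im hpos (by omega)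
          have h1 : v (im + 1) ≤ v im := hmax (im + 1) (Finset.mem_range.mpr (by omega))
          have h2 : v (im - 1) ≤ v im := hmax (im - 1) (Finset.mem_range.mpr (by omega))
          have hμcmp : μ ((v (im + 1) - v im) / h) ≤ μ ((v im - v (im - 1)) / h) := by
            apply hμmono
            have ha : (v (im + 1) - v im) / h ≤ 0 :=
              div_nonpos_of_nonpos_of_nonneg (by linarith) hh.le
            have hb : 0 ≤ (v im - v (im - 1)) / h :=
              div_nonneg (by linarith) hh.le
            linarith
          have hβle : β (v im) ≤ β (w im) := by
            nlinarith [heq, hhτ]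
          have : v im ≤ w im := (hβm.le_iff_le).mp hβle
          have := (hwb im him).2
          linarith
        · -- im = N
          have hNi : im = N := le_antisymm him hge
          subst hNi
          have h1 : v (im - 1) ≤ v im := hmax (im - 1) (Finset.mem_range.mpr (by omega))
          have hμ1 : 0 ≤ μ ((v im - v (im - 1)) / h) := by
            have : (0:ℝ) ≤ (v im - v (im - 1)) / h := div_nonneg (by linarith) hh.le
            calc (0:ℝ) = μ 0 := hμ0.symm
            _ ≤ μ ((v im - v (im - 1)) / h) := hμmono this
          have hβgt : β (w im) < β (v im) :=
            hβm (lt_of_le_of_lt (hwb im le_rfl).2 hgt)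
          have hA : 0 < h / (2 * τ) * (β (v im) - β (w im)) :=
            mul_pos h2τ (by linarith)
          have hB : α * q ≤ α * uup := mul_le_mul_of_nonneg_left hq2 hα.le
          have hC : α * uup < α * v im := mul_lt_mul_of_pos_left hgt hα
          linarith [eqN]
    intro i hi
    exact le_trans (hmax i (Finset.mem_range.mpr (by omega))) hub
  -- lower bound
  have hlower : ∀ i ≤ N, ulow ≤ v i := by
    obtain ⟨im, himmem, hmin⟩ := Finset.exists_min_image (Finset.range (N + 1)) v
      ⟨0, Finset.mem_range.mpr (Nat.succ_pos N)⟩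
    have him : im ≤ N := Nat.lt_succ_iff.mp (Finset.mem_range.mp himmem)
    have hlb : ulow ≤ v im := by
      by_contra hgt
      push_neg at hgt
      rcases Nat.eq_zero_or_pos im with h0 | hpos
      · subst h0
        have h1 : v 0 ≤ v 1 := hmin 1 (Finset.mem_range.mpr (by omega))
        have hμ1 : 0 ≤ μ ((v 1 - v 0) / h) := by
          have : (0:ℝ) ≤ (v 1 - v 0) / h := div_nonneg (by linarith) hh.le
          calc (0:ℝ) = μ 0 := hμ0.symm
          _ ≤ μ ((v 1 - v 0) / h) := hμmono this
        have hβgt : β (v 0) < β (w 0) :=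
          hβm (lt_of_lt_of_le hgt (hwb 0 (by omega)).1)
        have hA : h / (2 * τ) * (β (v 0) - β (w 0)) < 0 :=
          mul_neg_of_pos_of_neg h2τ (by linarith)
        have hB : α * ulow ≤ α * p := mul_le_mul_of_nonneg_left hp1 hα.le
        have hC : α * v 0 < α * ulow := mul_lt_mul_of_pos_left hgt hα
        linarith [eq0]
      · rcases Nat.lt_or_ge im N with hlt | hge
        · have heq := eqI im hpos (by omega)
          have h1 : v im ≤ v (im + 1) := hmin (im + 1) (Finset.mem_range.mpr (by omega))
          have h2 : v im ≤ v (im - 1) := hmin (im - 1) (Finset.mem_range.mpr (by omega))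
          have hμcmp : μ ((v im - v (im - 1)) / h) ≤ μ ((v (im + 1) - v im) / h) := by
            apply hμmono
            have ha : (v im - v (im - 1)) / h ≤ 0 :=
              div_nonpos_of_nonpos_of_nonneg (by linarith) hh.le
            have hb : 0 ≤ (v (im + 1) - v im) / h :=
              div_nonneg (by linarith) hh.le
            linarith
          have hβle : β (w im) ≤ β (v im) := by
            nlinarith [heq, hhτ]
          have : w im ≤ v im := (hβm.le_iff_le).mp hβle
          have := (hwb im him).1
          linarith
        · have hNi : im = N := le_antisymm him hge
          subst hNi
          have h1 : v im ≤ v (im - 1) := hmin (im - 1) (Finset.mem_range.mpr (by omega))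
          have hμ1 : μ ((v im - v (im - 1)) / h) ≤ 0 := by
            have : (v im - v (im - 1)) / h ≤ 0 :=
              div_nonpos_of_nonpos_of_nonneg (by linarith) hh.le
            calc μ ((v im - v (im - 1)) / h) ≤ μ 0 := hμmono this
            _ = 0 := hμ0
          have hβgt : β (v im) < β (w im) :=
            hβm (lt_of_lt_of_le hgt (hwb im le_rfl).1)
          have hA : h / (2 * τ) * (β (v im) - β (w im)) < 0 :=
            mul_neg_of_pos_of_neg h2τ (by linarith)
          have hB : α * ulow ≤ α * q := mul_le_mul_of_nonneg_left hq1 hα.le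
          have hC : α * v im < α * ulow := mul_lt_mul_of_pos_left hgt hα
          linarith [eqN]
    intro i hi
    exact le_trans hlb (hmin i (Finset.mem_range.mpr (by omega)))
  exact fun i hi => ⟨hlower i hi, hupper i hi⟩

set_option maxHeartbeats 2000000 in
lemma step_estimate (β μ : ℝ → ℝ) (hμc : Continuous μ) (hμmono : Monotone μ)
    (c α h τ p p' q q' ulow uup : ℝ)
    (hc : 0 < c) (hα : 0 < α) (hh : 0 < h) (hτ : 0 < τ)
    (hslope : ∀ x y : ℝ, ulow ≤ x → x ≤ uup → ulow ≤ y → y ≤ uup →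
        c * (x - y) ^ 2 ≤ (β x - β y) * (x - y))
    (N : ℕ) (hN : 1 ≤ N) (w v : ℕ → ℝ)
    (hstep : DiscreteStep β μ h τ α N p q w v)
    (hwb : ∀ i ≤ N, ulow ≤ w i ∧ w i ≤ uup)
    (hvb : ∀ i ≤ N, ulow ≤ v i ∧ v i ≤ uup) :
    c / τ * normSq h N (fun i => v i - w i) ≤
      h * ∑ j ∈ Finset.Icc 1 N,
          (Mfun μ ((w j - w (j - 1)) / h) - Mfun μ ((v j - v (j - 1)) / h))
        + (α / 2 * (w 0 - p') ^ 2 - α / 2 * (v 0 - p) ^ 2)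
        + (α / 2 * (w N - q') ^ 2 - α / 2 * (v N - q) ^ 2)
        + α * (v 0 - p) * (p' - p) + α * (v N - q) * (q' - q) := by
  obtain ⟨eqI, eq0, eqN⟩ := hstep
  set Δ : ℕ → ℝ := fun i => v i - w i with hΔdef
  set g : ℕ → ℝ := fun j => μ ((v j - v (j - 1)) / h) with hgdef
  have hg1 : ∀ i : ℕ, g (i + 1) = μ ((v (i + 1) - v i) / h) := by
    intro i; simp [hgdef]
  -- Step 1: identity
  have hTmid : ∀ i ∈ Finset.Icc 1 (N - 1),
      h / τ * (β (v i) - β (w i)) * Δ i = (g (i + 1) - g i) * Δ i := by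
    intro i hi
    obtain ⟨hi1, hi2⟩ := Finset.mem_Icc.mp hi
    have heq := eqI i hi1 hi2
    have : h / τ * (β (v i) - β (w i)) = g (i + 1) - g i := by
      rw [hg1]; simp only [hgdef]; linarith [heq]
    rw [this]
  have hident :
      (∑ i ∈ Finset.Icc 1 (N - 1), h / τ * (β (v i) - β (w i)) * Δ i)
          + h / (2 * τ) * (β (v 0) - β (w 0)) * Δ 0
          + h / (2 * τ) * (β (v N) - β (w N)) * Δ N
        = (∑ j ∈ Finset.Icc 1 N, g j * (Δ (j - 1) - Δ j))
          + α * (p - v 0) * Δ 0 + α * (q - v N) * Δ N := by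
    rw [Finset.sum_congr rfl hTmid]
    have e2 : h / (2 * τ) * (β (v 0) - β (w 0)) = α * p - α * v 0 + g 1 := by
      simp only [hgdef]
      have : (1:ℕ) - 1 = 0 := rfl
      rw [this]
      linarith [eq0]
    have e3 : h / (2 * τ) * (β (v N) - β (w N)) = α * q - α * v N - g N := by
      simp only [hgdef]
      linarith [eqN]
    rw [e2, e3]
    have habel := abel_identity g Δ N hN
    linear_combination habel
  -- Step 2: bound the μ-sum via the primitive
  have hsum_le : (∑ j ∈ Finset.Icc 1 N, g j * (Δ (j - 1) - Δ j))
      ≤ h * ∑ j ∈ Finset.Icc 1 N,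
          (Mfun μ ((w j - w (j - 1)) / h) - Mfun μ ((v j - v (j - 1)) / h)) := by
    rw [Finset.mul_sum]
    apply Finset.sum_le_sum
    intro j hj
    have key := Mfun_convex_ineq μ hμc hμmono ((v j - v (j - 1)) / h) ((w j - w (j - 1)) / h)
    have hΔe : Δ (j - 1) - Δ j
        = h * ((w j - w (j - 1)) / h - (v j - v (j - 1)) / h) := by
      simp only [hΔdef]
      field_simp
      ring
    rw [hΔe]
    simp only [hgdef]
    have := mul_le_mul_of_nonneg_left key hh.le
    nlinarith [this]
  -- Step 3: boundary terms
  have hb0 : α * (p - v 0) * Δ 0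
      ≤ (α / 2 * (w 0 - p') ^ 2 - α / 2 * (v 0 - p) ^ 2) + α * (v 0 - p) * (p' - p) := by
    simp only [hΔdef]
    nlinarith [mul_nonneg hα.le (sq_nonneg ((v 0 - p) - (w 0 - p')))]
  have hbN : α * (q - v N) * Δ N
      ≤ (α / 2 * (w N - q') ^ 2 - α / 2 * (v N - q) ^ 2) + α * (v N - q) * (q' - q) := by
    simp only [hΔdef]
    nlinarith [mul_nonneg hα.le (sq_nonneg ((v N - q) - (w N - q')))]
  -- Step 4: lower bound by the norm
  have hnorm : normSq h N Δ
      ≤ h * (∑ i ∈ Finset.Icc 1 (N - 1), Δ i ^ 2) + h / 2 * (Δ 0 ^ 2 + Δ N ^ 2) := by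
    unfold normSq
    have h1 : ∀ i ∈ Finset.range N,
        h / 3 * (Δ i ^ 2 + Δ i * Δ (i + 1) + Δ (i + 1) ^ 2)
          ≤ h / 2 * (Δ i ^ 2 + Δ (i + 1) ^ 2) := by
      intro i _
      have e : h / 2 * (Δ i ^ 2 + Δ (i + 1) ^ 2)
          - h / 3 * (Δ i ^ 2 + Δ i * Δ (i + 1) + Δ (i + 1) ^ 2)
          = h / 6 * (Δ i - Δ (i + 1)) ^ 2 := by ring
      have e2 : 0 ≤ h / 6 * (Δ i - Δ (i + 1)) ^ 2 := by positivity
      linarith [e, e2]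
    calc ∑ i ∈ Finset.range N, h / 3 * (Δ i ^ 2 + Δ i * Δ (i + 1) + Δ (i + 1) ^ 2)
        ≤ ∑ i ∈ Finset.range N, h / 2 * (Δ i ^ 2 + Δ (i + 1) ^ 2) :=
          Finset.sum_le_sum h1
      _ = h / 2 * ∑ i ∈ Finset.range N, (Δ i ^ 2 + Δ (i + 1) ^ 2) := by
          rw [Finset.mul_sum]
      _ = h / 2 * (2 * (∑ i ∈ Finset.Icc 1 (N - 1), Δ i ^ 2) + Δ 0 ^ 2 + Δ N ^ 2) := by
          rw [lumped_split (fun i => Δ i ^ 2) N hN]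
      _ = h * (∑ i ∈ Finset.Icc 1 (N - 1), Δ i ^ 2) + h / 2 * (Δ 0 ^ 2 + Δ N ^ 2) := by
          ring
  have hS1 : (∑ i ∈ Finset.Icc 1 (N - 1), c * h / τ * Δ i ^ 2)
      ≤ ∑ i ∈ Finset.Icc 1 (N - 1), h / τ * (β (v i) - β (w i)) * Δ i := by
    apply Finset.sum_le_sum
    intro i hi
    obtain ⟨hi1, hi2⟩ := Finset.mem_Icc.mp hi
    have hiN : i ≤ N := by omega
    have hsl := hslope (v i) (w i) (hvb i hiN).1 (hvb i hiN).2 (hwb i hiN).1 (hwb i hiN).2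
    have hdiv : (0:ℝ) ≤ h / τ := by positivity
    have := mul_le_mul_of_nonneg_left hsl hdiv
    calc c * h / τ * Δ i ^ 2 = h / τ * (c * (v i - w i) ^ 2) := by
          simp only [hΔdef]; ring
      _ ≤ h / τ * ((β (v i) - β (w i)) * (v i - w i)) := this
      _ = h / τ * (β (v i) - β (w i)) * Δ i := by
          simp only [hΔdef]; ring
  have hS0 : c / τ * (h / 2 * Δ 0 ^ 2) ≤ h / (2 * τ) * (β (v 0) - β (w 0)) * Δ 0 := by
    have hsl := hslope (v 0) (w 0) (hvb 0 (by omega)).1 (hvb 0 (by omega)).2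
      (hwb 0 (by omega)).1 (hwb 0 (by omega)).2
    have hdiv : (0:ℝ) ≤ h / (2 * τ) := by positivity
    have := mul_le_mul_of_nonneg_left hsl hdiv
    calc c / τ * (h / 2 * Δ 0 ^ 2) = h / (2 * τ) * (c * (v 0 - w 0) ^ 2) := by
          simp only [hΔdef]; field_simp
      _ ≤ h / (2 * τ) * ((β (v 0) - β (w 0)) * (v 0 - w 0)) := this
      _ = h / (2 * τ) * (β (v 0) - β (w 0)) * Δ 0 := by
          simp only [hΔdef]; ring
  have hSN : c / τ * (h / 2 * Δ N ^ 2) ≤ h / (2 * τ) * (β (v N) - β (w N)) * Δ N := by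
    have hsl := hslope (v N) (w N) (hvb N le_rfl).1 (hvb N le_rfl).2
      (hwb N le_rfl).1 (hwb N le_rfl).2
    have hdiv : (0:ℝ) ≤ h / (2 * τ) := by positivity
    have := mul_le_mul_of_nonneg_left hsl hdiv
    calc c / τ * (h / 2 * Δ N ^ 2) = h / (2 * τ) * (c * (v N - w N) ^ 2) := by
          simp only [hΔdef]; field_simp
      _ ≤ h / (2 * τ) * ((β (v N) - β (w N)) * (v N - w N)) := this
      _ = h / (2 * τ) * (β (v N) - β (w N)) * Δ N := by
          simp only [hΔdef]; ring
  have hcτ : (0:ℝ) ≤ c / τ := by positivity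
  have hlow : c / τ * normSq h N Δ
      ≤ (∑ i ∈ Finset.Icc 1 (N - 1), h / τ * (β (v i) - β (w i)) * Δ i)
        + h / (2 * τ) * (β (v 0) - β (w 0)) * Δ 0
        + h / (2 * τ) * (β (v N) - β (w N)) * Δ N := by
    have h2 := mul_le_mul_of_nonneg_left hnorm hcτ
    have h3 : c / τ * (h * (∑ i ∈ Finset.Icc 1 (N - 1), Δ i ^ 2)
        + h / 2 * (Δ 0 ^ 2 + Δ N ^ 2))
        = (∑ i ∈ Finset.Icc 1 (N - 1), c * h / τ * Δ i ^ 2)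
          + c / τ * (h / 2 * Δ 0 ^ 2) + c / τ * (h / 2 * Δ N ^ 2) := by
      have hs : (∑ i ∈ Finset.Icc 1 (N - 1), c * h / τ * Δ i ^ 2)
          = c * h / τ * ∑ i ∈ Finset.Icc 1 (N - 1), Δ i ^ 2 := by
        rw [Finset.mul_sum]
      rw [hs]
      ring
    linarith [h2, hS1, hS0, hSN, h3.le, h3.ge]
  -- combine
  calc c / τ * normSq h N Δ
      ≤ (∑ i ∈ Finset.Icc 1 (N - 1), h / τ * (β (v i) - β (w i)) * Δ i)
        + h / (2 * τ) * (β (v 0) - β (w 0)) * Δ 0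
        + h / (2 * τ) * (β (v N) - β (w N)) * Δ N := hlow
    _ = (∑ j ∈ Finset.Icc 1 N, g j * (Δ (j - 1) - Δ j))
        + α * (p - v 0) * Δ 0 + α * (q - v N) * Δ N := hident
    _ ≤ _ := by linarith [hsum_le, hb0, hbN]

lemma mul_le_of_abs_le (a b D E : ℝ) (ha : |a| ≤ D) (hb : |b| ≤ E) : a * b ≤ D * E := by
  calc a * b ≤ |a * b| := le_abs_self _
    _ = |a| * |b| := abs_mul a b
    _ ≤ D * E := mul_le_mul ha hb (abs_nonneg b) (le_trans (abs_nonneg a) ha)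

set_option maxHeartbeats 2000000 in
/-- uniform bound on the discrete time derivatives,
`∑_{t^k ≤ T} τ ‖(u^k - u^{k-1})/τ‖²_{L²} ≤ C`, with `C` independent of the mesh
size and the time step. -/
theorem uniform_bound_discrete_time_derivative
    (ℓ α T : ℝ) (hℓ : 0 < ℓ) (hα : 0 < α) (hT : 0 < T)
    (β : ℝ → ℝ) (hβc : Continuous β) (hβm : StrictMono β)
    (hβd : ∀ x : ℝ, 0 < x → DifferentiableAt ℝ β x)
    (hβdc : ContinuousOn (deriv β) (Set.Ioi 0))
    (hβ' : ∀ x : ℝ, 0 < x → 0 < deriv β x)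
    (hB : Tendsto (fun u : ℝ => (∫ s in (0:ℝ)..u, β s) / |u|) (cocompact ℝ) atTop)
    (μ : ℝ → ℝ) (hμc : Continuous μ) (hμ0 : μ 0 = 0)
    (hμd : ∀ s : ℝ, s ≠ 0 → DifferentiableAt ℝ μ s)
    (hμ' : ∀ s : ℝ, s ≠ 0 → 0 < deriv μ s)
    (ulow uup : ℝ) (hul : 0 < ulow) (hbnd : ulow ≤ uup)
    (u₀ : ℝ → ℝ) (K₀ : NNReal) (hu₀l : LipschitzOnWith K₀ u₀ (Set.Icc 0 ℓ))
    (hu₀ : ∀ x ∈ Set.Icc 0 ℓ, ulow ≤ u₀ x ∧ u₀ x ≤ uup)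
    (pbd qbd : ℝ → ℝ) (Kb : NNReal)
    (hpl : LipschitzWith Kb pbd) (hql : LipschitzWith Kb qbd)
    (hpb : ∀ t : ℝ, 0 ≤ t → ulow ≤ pbd t ∧ pbd t ≤ uup)
    (hqb : ∀ t : ℝ, 0 ≤ t → ulow ≤ qbd t ∧ qbd t ≤ uup) :
    ∃ C : ℝ, 0 < C ∧
      ∀ N : ℕ, 2 ≤ N → ∀ τ : ℝ, 0 < τ → τ < T → ∀ u : ℕ → ℕ → ℝ,
        (∀ i ≤ N, u 0 i = u₀ (i * (ℓ / N))) →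
        (∀ k : ℕ, 1 ≤ k →
          DiscreteStep β μ (ℓ / N) τ α N (pbd (k * τ)) (qbd (k * τ)) (u (k - 1)) (u k)) →
        ∑ k ∈ Finset.Icc 1 (Nat.floor (T / τ)),
            τ * normSq (ℓ / N) N (fun i => (u k i - u (k - 1) i) / τ) ≤ C := by
  obtain ⟨c, hc, hslope⟩ := exists_slope_const β hβc hβd hβdc hβ' ulow uup hul hbnd
  have hμmono : Monotone μ := mono_of_deriv μ hμc hμd hμ'
  set D : ℝ := uup - ulow with hDdef
  have hD : 0 ≤ D := by simp only [hDdef]; linarith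
  set B0 : ℝ := (|μ (K₀:ℝ)| + |μ (-(K₀:ℝ))|) * (K₀:ℝ) with hB0def
  have hB0 : 0 ≤ B0 := by positivity
  set C0 : ℝ := ℓ * B0 + α * D ^ 2 + 2 * α * D * (Kb:ℝ) * T with hC0def
  have hC0 : 0 ≤ C0 := by
    have h1 : 0 ≤ ℓ * B0 := mul_nonneg hℓ.le hB0
    have h2 : 0 ≤ α * D ^ 2 := by positivity
    have h3 : 0 ≤ 2 * α * D * (Kb:ℝ) * T := by positivity
    simp only [hC0def]; linarith
  refine ⟨C0 / c + 1, by positivity, ?_⟩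
  intro N hN2 τ hτ hτT u hinit hsteps
  have hN1 : 1 ≤ N := by omega
  have hNR : (0:ℝ) < (N:ℝ) := by exact_mod_cast (by omega : 0 < N)
  set h : ℝ := ℓ / (N:ℝ) with hhdef
  have hh : 0 < h := div_pos hℓ hNR
  have hNh : (N:ℝ) * h = ℓ := by
    rw [hhdef]; field_simp
  have hgrid : ∀ i : ℕ, i ≤ N → (i:ℝ) * h ∈ Set.Icc 0 ℓ := by
    intro i hi
    constructor
    · positivity
    · have hiN : (i:ℝ) ≤ (N:ℝ) := by exact_mod_cast hi
      calc (i:ℝ) * h ≤ (N:ℝ) * h := mul_le_mul_of_nonneg_right hiN hh.le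
        _ = ℓ := hNh
  have hbnds : ∀ k : ℕ, ∀ i ≤ N, ulow ≤ u k i ∧ u k i ≤ uup := by
    intro k
    induction k with
    | zero =>
      intro i hi
      rw [hinit i hi]
      exact hu₀ _ (hgrid i hi)
    | succ n ih =>
      have hstep := hsteps (n + 1) (by omega)
      have hred : n + 1 - 1 = n := rfl
      rw [hred] at hstep
      have ht0 : (0:ℝ) ≤ (↑(n + 1):ℝ) * τ := by positivity
      exact max_principle β μ hβm hμmono hμ0 h τ α hh hτ hα N hN1
        (pbd (↑(n + 1) * τ)) (qbd (↑(n + 1) * τ)) ulow uup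
        (hpb _ ht0).1 (hpb _ ht0).2 (hqb _ ht0).1 (hqb _ ht0).2
        (u n) (u (n + 1)) hstep ih
  set K := Nat.floor (T / τ) with hKdef
  set A : ℕ → ℝ :=
    fun k => h * ∑ j ∈ Finset.Icc 1 N, Mfun μ ((u k j - u k (j - 1)) / h) with hAdef
  set P : ℕ → ℝ := fun k => α / 2 * (u k 0 - pbd (↑k * τ)) ^ 2 with hPdef
  set Q : ℕ → ℝ := fun k => α / 2 * (u k N - qbd (↑k * τ)) ^ 2 with hQdef
  clear_value D B0 C0 h K A P Q
  have key : ∀ k ∈ Finset.Icc 1 K,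
      τ * normSq h N (fun i => (u k i - u (k - 1) i) / τ)
        ≤ ((A (k - 1) - A k) + (P (k - 1) - P k) + (Q (k - 1) - Q k)
            + 2 * α * D * (Kb:ℝ) * τ) / c := by
    intro k hkmem
    have hk : 1 ≤ k := (Finset.mem_Icc.mp hkmem).1
    have hstep := hsteps k hk
    have hse := step_estimate β μ hμc hμmono c α h τ
      (pbd (↑k * τ)) (pbd (↑(k - 1) * τ)) (qbd (↑k * τ)) (qbd (↑(k - 1) * τ)) ulow uup
      hc hα hh hτ hslope N hN1 (u (k - 1)) (u k) hstep (hbnds (k - 1)) (hbnds k)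
    have hAeq : h * ∑ j ∈ Finset.Icc 1 N,
        (Mfun μ ((u (k - 1) j - u (k - 1) (j - 1)) / h)
          - Mfun μ ((u k j - u k (j - 1)) / h))
        = A (k - 1) - A k := by
      simp only [hAdef]
      rw [Finset.sum_sub_distrib, mul_sub]
    have hPe : P (k - 1) - P k
        = α / 2 * (u (k - 1) 0 - pbd (↑(k - 1) * τ)) ^ 2
          - α / 2 * (u k 0 - pbd (↑k * τ)) ^ 2 := by
      simp only [hPdef]
    have hQe : Q (k - 1) - Q k
        = α / 2 * (u (k - 1) N - qbd (↑(k - 1) * τ)) ^ 2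
          - α / 2 * (u k N - qbd (↑k * τ)) ^ 2 := by
      simp only [hQdef]
    have hkcast : ((k - 1 : ℕ):ℝ) = (k:ℝ) - 1 := by
      have := Nat.cast_sub (R := ℝ) hk
      simpa using this
    have ht0k : (0:ℝ) ≤ ↑k * τ := by positivity
    have habs_t : |((k - 1 : ℕ):ℝ) * τ - ↑k * τ| = τ := by
      rw [hkcast, show ((k:ℝ) - 1) * τ - ↑k * τ = -τ by ring, abs_neg, abs_of_pos hτ]
    have habs_p : |pbd (↑(k - 1) * τ) - pbd (↑k * τ)| ≤ (Kb:ℝ) * τ := by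
      have hd := hpl.dist_le_mul (↑(k - 1) * τ) (↑k * τ)
      rw [Real.dist_eq, Real.dist_eq, habs_t] at hd
      exact hd
    have habs_q : |qbd (↑(k - 1) * τ) - qbd (↑k * τ)| ≤ (Kb:ℝ) * τ := by
      have hd := hql.dist_le_mul (↑(k - 1) * τ) (↑k * τ)
      rw [Real.dist_eq, Real.dist_eq, habs_t] at hd
      exact hd
    have habs_a0 : |u k 0 - pbd (↑k * τ)| ≤ D := by
      have h1 := hbnds k 0 (by omega)
      have h2 := hpb _ ht0k
      rw [abs_le]
      constructor
      · simp only [hDdef]; linarith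
      · simp only [hDdef]; linarith
    have habs_aN : |u k N - qbd (↑k * τ)| ≤ D := by
      have h1 := hbnds k N le_rfl
      have h2 := hqb _ ht0k
      rw [abs_le]
      constructor
      · simp only [hDdef]; linarith
      · simp only [hDdef]; linarith
    have herr0 : α * (u k 0 - pbd (↑k * τ)) * (pbd (↑(k - 1) * τ) - pbd (↑k * τ))
        ≤ α * D * (Kb:ℝ) * τ := by
      have hm := mul_le_of_abs_le _ _ D ((Kb:ℝ) * τ) habs_a0 habs_p
      calc α * (u k 0 - pbd (↑k * τ)) * (pbd (↑(k - 1) * τ) - pbd (↑k * τ))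
          = α * ((u k 0 - pbd (↑k * τ)) * (pbd (↑(k - 1) * τ) - pbd (↑k * τ))) := by ring
        _ ≤ α * (D * ((Kb:ℝ) * τ)) := mul_le_mul_of_nonneg_left hm hα.le
        _ = α * D * (Kb:ℝ) * τ := by ring
    have herrN : α * (u k N - qbd (↑k * τ)) * (qbd (↑(k - 1) * τ) - qbd (↑k * τ))
        ≤ α * D * (Kb:ℝ) * τ := by
      have hm := mul_le_of_abs_le _ _ D ((Kb:ℝ) * τ) habs_aN habs_q
      calc α * (u k N - qbd (↑k * τ)) * (qbd (↑(k - 1) * τ) - qbd (↑k * τ))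
          = α * ((u k N - qbd (↑k * τ)) * (qbd (↑(k - 1) * τ) - qbd (↑k * τ))) := by ring
        _ ≤ α * (D * ((Kb:ℝ) * τ)) := mul_le_mul_of_nonneg_left hm hα.le
        _ = α * D * (Kb:ℝ) * τ := by ring
    have hns : τ * normSq h N (fun i => (u k i - u (k - 1) i) / τ)
        = normSq h N (fun i => u k i - u (k - 1) i) / τ := by
      unfold normSq
      rw [Finset.mul_sum, Finset.sum_div]
      apply Finset.sum_congr rfl
      intro i _
      field_simp
    rw [hns, le_div_iff₀ hc]
    have hfe : normSq h N (fun i => u k i - u (k - 1) i) / τ * c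
        = c / τ * normSq h N (fun i => u k i - u (k - 1) i) := by
      ring
    rw [hfe]
    refine le_trans hse ?_
    rw [hAeq, ← hPe, ← hQe]
    linarith [herr0, herrN]
  have hA0 : A 0 ≤ ℓ * B0 := by
    have hterm : ∀ j ∈ Finset.Icc 1 N, Mfun μ ((u 0 j - u 0 (j - 1)) / h) ≤ B0 := by
      intro j hj
      obtain ⟨hj1, hj2⟩ := Finset.mem_Icc.mp hj
      have hjm : j - 1 ≤ N := by omega
      have hjcast : ((j - 1 : ℕ):ℝ) = (j:ℝ) - 1 := by
        have := Nat.cast_sub (R := ℝ) hj1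
        simpa using this
      have hs : |(u 0 j - u 0 (j - 1)) / h| ≤ (K₀:ℝ) := by
        rw [hinit j hj2, hinit (j - 1) hjm]
        have hd := hu₀l.dist_le_mul ((j:ℝ) * h) (hgrid j hj2)
          (((j - 1 : ℕ):ℝ) * h) (hgrid (j - 1) hjm)
        rw [Real.dist_eq, Real.dist_eq] at hd
        have hdist : |(j:ℝ) * h - ((j - 1 : ℕ):ℝ) * h| = h := by
          rw [hjcast, show (j:ℝ) * h - ((j:ℝ) - 1) * h = h by ring,
            abs_of_pos hh]
        rw [hdist] at hd
        rw [abs_div, abs_of_pos hh, div_le_iff₀ hh]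
        exact hd
      rw [hB0def]
      exact Mfun_bound μ hμmono (K₀:ℝ) K₀.coe_nonneg _ hs
    have hsum := Finset.sum_le_card_nsmul _ _ B0 hterm
    rw [Nat.card_Icc] at hsum
    simp only [Nat.add_sub_cancel, nsmul_eq_mul] at hsum
    calc A 0 = h * ∑ j ∈ Finset.Icc 1 N, Mfun μ ((u 0 j - u 0 (j - 1)) / h) := by
          simp only [hAdef]
      _ ≤ h * ((N:ℝ) * B0) := mul_le_mul_of_nonneg_left hsum hh.le
      _ = ℓ * B0 := by rw [← hNh]; ring
  have hAK : 0 ≤ A K := by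
    simp only [hAdef]
    apply mul_nonneg hh.le
    apply Finset.sum_nonneg
    intro j _
    exact Mfun_nonneg μ hμc hμmono hμ0 _
  have hsq : ∀ (x y : ℝ), ulow ≤ x → x ≤ uup → ulow ≤ y → y ≤ uup →
      (x - y) ^ 2 ≤ D ^ 2 := by
    intro x y h1 h2 h3 h4
    apply sq_le_sq'
    · simp only [hDdef]; linarith
    · simp only [hDdef]; linarith
  have hP0 : P 0 ≤ α / 2 * D ^ 2 := by
    simp only [hPdef, Nat.cast_zero, zero_mul]
    have h1 := hbnds 0 0 (by omega)
    have h2 := hpb 0 le_rfl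
    exact mul_le_mul_of_nonneg_left (hsq _ _ h1.1 h1.2 h2.1 h2.2) (by positivity)
  have hQ0 : Q 0 ≤ α / 2 * D ^ 2 := by
    simp only [hQdef, Nat.cast_zero, zero_mul]
    have h1 := hbnds 0 N le_rfl
    have h2 := hqb 0 le_rfl
    exact mul_le_mul_of_nonneg_left (hsq _ _ h1.1 h1.2 h2.1 h2.2) (by positivity)
  have hPK : 0 ≤ P K := by
    simp only [hPdef]; positivity
  have hQK : 0 ≤ Q K := by
    simp only [hQdef]; positivity
  have hKτ : (K:ℝ) * τ ≤ T := by
    have h1 : (K:ℝ) ≤ T / τ := by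
      rw [hKdef]
      exact Nat.floor_le (by positivity)
    calc (K:ℝ) * τ ≤ (T / τ) * τ := mul_le_mul_of_nonneg_right h1 hτ.le
      _ = T := by field_simp
  calc ∑ k ∈ Finset.Icc 1 K, τ * normSq h N (fun i => (u k i - u (k - 1) i) / τ)
      ≤ ∑ k ∈ Finset.Icc 1 K,
          (((A (k - 1) - A k) + (P (k - 1) - P k) + (Q (k - 1) - Q k)
            + 2 * α * D * (Kb:ℝ) * τ) / c) := Finset.sum_le_sum key
    _ = ((A 0 - A K) + (P 0 - P K) + (Q 0 - Q K)
          + (K:ℝ) * (2 * α * D * (Kb:ℝ) * τ)) / c := by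
        rw [← Finset.sum_div]
        congr 1
        rw [Finset.sum_add_distrib, Finset.sum_add_distrib, Finset.sum_add_distrib,
          telescope_Icc A K, telescope_Icc P K, telescope_Icc Q K,
          Finset.sum_const, Nat.card_Icc]
        simp only [Nat.add_sub_cancel, nsmul_eq_mul]
    _ ≤ C0 / c := by
        apply (div_le_div_iff_of_pos_right hc).mpr
        have h5 : (K:ℝ) * (2 * α * D * (Kb:ℝ) * τ) = 2 * α * D * (Kb:ℝ) * ((K:ℝ) * τ) := by
          ring
        have h7 : (0:ℝ) ≤ 2 * α * D * (Kb:ℝ) :=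
          mul_nonneg (mul_nonneg (mul_nonneg (by norm_num) hα.le) hD) Kb.coe_nonneg
        have h6 : 2 * α * D * (Kb:ℝ) * ((K:ℝ) * τ) ≤ 2 * α * D * (Kb:ℝ) * T :=
          mul_le_mul_of_nonneg_left hKτ h7
        simp only [hC0def]
        linarith [hA0, hAK, hP0, hQ0, hPK, hQK, h5.le, h5.ge, h6]
    _ ≤ C0 / c + 1 := by linarith
end

section
/- Uniform gradient-energy bound: there exists a constant C > 0, depending only on ℓ, α, T, β, μ, u̲, ū and the Lipschitz constants of u₀ and u_∂, but not on N or τ, such that for every integer N ≥ 2, every τ ∈ (0,T), and every discrete solution (u^k) of the scheme with u^0_i = u₀(ih), p^k = u_∂(t^k,0), q^k = u_∂(t^k,ℓ), one has h·Σ_{i=1}^{N} M(δ^k_i) ≤ C for all k ≥ 0 with t^k ≤ T, where M(s) = ∫₀^s μ(σ) dσ and δ^k_i = (u^k_i − u^k_{i−1})/h. -/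
open Filter

noncomputable def Mf (μ : ℝ → ℝ) (s : ℝ) : ℝ := ∫ σ in (0:ℝ)..s, μ σ

lemma intInt {f : ℝ → ℝ} (hf : Continuous f) (x y : ℝ) :
    IntervalIntegrable f MeasureTheory.volume x y := hf.intervalIntegrable x y

lemma mono_mu {μ : ℝ → ℝ} (hμc : Continuous μ)
    (hμ' : ∀ s : ℝ, s ≠ 0 → 0 < deriv μ s) : Monotone μ := by
  have h1 : StrictMonoOn μ (Set.Ici 0) := by
    apply strictMonoOn_of_deriv_pos (convex_Ici 0) hμc.continuousOn
    intro x hx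
    rw [interior_Ici] at hx
    exact hμ' x (ne_of_gt hx)
  have h2 : StrictMonoOn μ (Set.Iic 0) := by
    apply strictMonoOn_of_deriv_pos (convex_Iic 0) hμc.continuousOn
    intro x hx
    rw [interior_Iic] at hx
    exact hμ' x (ne_of_lt hx)
  intro a b hab
  rcases eq_or_lt_of_le hab with rfl | hab
  · exact le_refl _
  · rcases le_or_gt 0 a with h0a | h0a
    · exact (h1 (by exact h0a) (le_trans h0a hab.le) hab).le
    · rcases le_or_gt b 0 with hb0 | hb0
      · exact (h2 (le_of_lt h0a) hb0 hab).le
      · exact le_trans (h2 (le_of_lt h0a) (Set.mem_Iic.mpr le_rfl) h0a).le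
          (h1 (Set.mem_Ici.mpr le_rfl) hb0.le hb0).le

lemma chain_ineq {μ : ℝ → ℝ} (hμc : Continuous μ) (hm : Monotone μ) (a b : ℝ) :
    Mf μ b - Mf μ a ≤ μ b * (b - a) := by
  have hI : ∀ x y : ℝ, IntervalIntegrable μ MeasureTheory.volume x y :=
    fun x y => hμc.intervalIntegrable x y
  have hsub : Mf μ b - Mf μ a = ∫ σ in a..b, μ σ :=
    intervalIntegral.integral_interval_sub_left (hI 0 b) (hI 0 a)
  rw [hsub]
  rcases le_total a b with hab | hab
  · have := intervalIntegral.integral_mono_on hab (hI a b)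
      (intInt (continuous_const : Continuous (fun _ : ℝ => μ b)) a b)
      (fun x hx => hm hx.2)
    simpa [mul_comm] using this
  · rw [intervalIntegral.integral_symm]
    have := intervalIntegral.integral_mono_on hab
      (intInt (continuous_const : Continuous (fun _ : ℝ => μ b)) b a)
      (hI b a) (fun x hx => hm hx.1)
    have h2 : μ b * (a - b) ≤ ∫ σ in b..a, μ σ := by simpa [mul_comm] using this
    linarith

lemma Mf_nonneg {μ : ℝ → ℝ} (hμc : Continuous μ) (hm : Monotone μ) (hμ0 : μ 0 = 0)
    (s : ℝ) : 0 ≤ Mf μ s := by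
  rcases le_total 0 s with hs | hs
  · exact intervalIntegral.integral_nonneg hs (fun x hx => hμ0 ▸ hm hx.1)
  · rw [Mf, intervalIntegral.integral_symm]
    have : ∫ σ in s..0, μ σ ≤ 0 := by
      have := intervalIntegral.integral_mono_on hs (intInt hμc s 0)
        (intInt (continuous_const : Continuous (fun _ : ℝ => (0:ℝ))) s 0)
        (fun x hx => hμ0 ▸ hm hx.2)
      simpa using this
    linarith

lemma Mf_le {μ : ℝ → ℝ} (hμc : Continuous μ) (hm : Monotone μ) (hμ0 : μ 0 = 0)
    {s c : ℝ} (hs : |s| ≤ c) : Mf μ s ≤ Mf μ c + Mf μ (-c) := by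
  have hc : 0 ≤ c := le_trans (abs_nonneg s) hs
  have h1 := abs_le.mp hs
  rcases le_total 0 s with h0s | h0s
  · have : Mf μ c - Mf μ s = ∫ σ in s..c, μ σ :=
      intervalIntegral.integral_interval_sub_left (intInt hμc 0 c)
        (intInt hμc 0 s)
    have h2 : 0 ≤ ∫ σ in s..c, μ σ :=
      intervalIntegral.integral_nonneg h1.2 (fun x hx => hμ0 ▸ hm (le_trans h0s hx.1))
    have := Mf_nonneg hμc hm hμ0 (-c)
    linarith
  · have : Mf μ s - Mf μ (-c) = ∫ σ in (-c)..s, μ σ :=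
      intervalIntegral.integral_interval_sub_left (intInt hμc 0 s)
        (intInt hμc 0 (-c))
    have h2 : ∫ σ in (-c)..s, μ σ ≤ 0 := by
      have := intervalIntegral.integral_mono_on h1.1 (intInt hμc (-c) s)
        (intInt (continuous_const : Continuous (fun _ : ℝ => (0:ℝ))) (-c) s)
        (fun x hx => hμ0 ▸ hm (le_trans hx.2 h0s))
      simpa using this
    have := Mf_nonneg hμc hm hμ0 c
    linarith

lemma byparts (F G : ℕ → ℝ) : ∀ n : ℕ,
    ∑ i ∈ Finset.Icc 1 n, (F (i+1) - F i) * G i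
      = F (n+1) * G (n+1) - F 1 * G 0 - ∑ i ∈ Finset.Icc 1 (n+1), F i * (G i - G (i-1)) := by
  intro n
  induction n with
  | zero => simp [Finset.Icc_self]; ring
  | succ m ih =>
    rw [Finset.sum_Icc_succ_top (by omega : 1 ≤ m + 1),
        Finset.sum_Icc_succ_top (by omega : 1 ≤ m + 1 + 1), ih]
    simp only [Nat.add_sub_cancel]
    ring

lemma bdry (p p' x w D Kτ : ℝ) (h1 : |p - p'| ≤ Kτ) (h2 : |p' - w| ≤ D) :
    (p - x) * (x - w) + (p - x)^2/2 ≤ (p' - w)^2/2 + D*Kτ + Kτ^2/2 := by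
  have hD : 0 ≤ D := le_trans (abs_nonneg _) h2
  have h3 : (p'-w)*(p-p') ≤ D*Kτ := by
    calc (p'-w)*(p-p') ≤ |(p'-w)*(p-p')| := le_abs_self _
      _ = |p'-w| * |p-p'| := abs_mul _ _
      _ ≤ D * Kτ := mul_le_mul h2 h1 (abs_nonneg _) hD
  have h4 : (p-p')^2 ≤ Kτ^2 := by
    have := pow_le_pow_left₀ (abs_nonneg (p-p')) h1 2
    simpa [sq_abs] using this
  nlinarith [sq_nonneg (x-w), h3, h4]

lemma maxprin {β μ : ℝ → ℝ} (hβm : StrictMono β) (hμm : Monotone μ) (hμ0 : μ 0 = 0)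
    {h τ α : ℝ} (hh : 0 < h) (hτ : 0 < τ) (hα : 0 < α) {N : ℕ} (hN : 2 ≤ N)
    {p q : ℝ} {w v : ℕ → ℝ} {lo hi : ℝ}
    (hw : ∀ i ≤ N, lo ≤ w i ∧ w i ≤ hi) (hp : lo ≤ p ∧ p ≤ hi) (hq : lo ≤ q ∧ q ≤ hi)
    (hs : DiscreteStep β μ h τ α N p q w v) : ∀ i ≤ N, lo ≤ v i ∧ v i ≤ hi := by
  have h2τ : 0 < h / (2 * τ) := by positivity
  have hτ' : 0 < h / τ := by positivity
  have hup : ∀ i ≤ N, v i ≤ hi := by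
    by_contra hcon
    push_neg at hcon
    obtain ⟨j, hjN, hj⟩ := hcon
    obtain ⟨i0, hi0mem, hi0⟩ := Finset.exists_max_image (Finset.Icc 0 N) v ⟨0, by simp⟩
    have hi0N : i0 ≤ N := (Finset.mem_Icc.mp hi0mem).2
    have hmax : ∀ m ≤ N, v m ≤ v i0 := fun m hm => hi0 m (Finset.mem_Icc.mpr ⟨Nat.zero_le _, hm⟩)
    have hbig : hi < v i0 := lt_of_lt_of_le hj (hmax j hjN)
    have hβlt : ∀ m ≤ N, β (w m) < β (v i0) := fun m hm =>
      hβm (lt_of_le_of_lt (hw m hm).2 hbig)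
    rcases Nat.eq_zero_or_pos i0 with rfl | hi0pos
    · have hd : (v 1 - v 0) / h ≤ 0 :=
        div_nonpos_of_nonpos_of_nonneg (by linarith [hmax 1 (by omega)]) hh.le
      have hμd : μ ((v 1 - v 0) / h) ≤ 0 := hμ0 ▸ hμm hd
      have e := hs.2.1
      have h1 : 0 < h / (2 * τ) * (β (v 0) - β (w 0)) :=
        mul_pos h2τ (by linarith [hβlt 0 (by omega)])
      have h2 : α * p < α * v 0 := by
        apply mul_lt_mul_of_pos_left _ hα; linarith [hp.2]
      linarith
    · rcases eq_or_lt_of_le hi0N with rfl | hi0lt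
      · have hd : 0 ≤ (v i0 - v (i0 - 1)) / h :=
          div_nonneg (by linarith [hmax (i0-1) (by omega)]) hh.le
        have hμd : 0 ≤ μ ((v i0 - v (i0 - 1)) / h) := hμ0 ▸ hμm hd
        have e := hs.2.2
        have h1 : 0 < h / (2 * τ) * (β (v i0) - β (w i0)) :=
          mul_pos h2τ (by linarith [hβlt i0 le_rfl])
        have h2 : α * q < α * v i0 := by
          apply mul_lt_mul_of_pos_left _ hα; linarith [hq.2]
        linarith
      · have e := hs.1 i0 hi0pos (by omega)
        have hd1 : (v (i0 + 1) - v i0) / h ≤ 0 :=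
          div_nonpos_of_nonpos_of_nonneg (by linarith [hmax (i0+1) (by omega)]) hh.le
        have hd2 : 0 ≤ (v i0 - v (i0 - 1)) / h :=
          div_nonneg (by linarith [hmax (i0-1) (by omega)]) hh.le
        have hμ1 : μ ((v (i0 + 1) - v i0) / h) ≤ 0 := hμ0 ▸ hμm hd1
        have hμ2 : 0 ≤ μ ((v i0 - v (i0 - 1)) / h) := hμ0 ▸ hμm hd2
        have h1 : 0 < h / τ * (β (v i0) - β (w i0)) :=
          mul_pos hτ' (by linarith [hβlt i0 hi0N])
        linarith
  have hlo : ∀ i ≤ N, lo ≤ v i := by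
    by_contra hcon
    push_neg at hcon
    obtain ⟨j, hjN, hj⟩ := hcon
    obtain ⟨i0, hi0mem, hi0⟩ := Finset.exists_min_image (Finset.Icc 0 N) v ⟨0, by simp⟩
    have hi0N : i0 ≤ N := (Finset.mem_Icc.mp hi0mem).2
    have hmin : ∀ m ≤ N, v i0 ≤ v m := fun m hm => hi0 m (Finset.mem_Icc.mpr ⟨Nat.zero_le _, hm⟩)
    have hbig : v i0 < lo := lt_of_le_of_lt (hmin j hjN) hj
    have hβlt : ∀ m ≤ N, β (v i0) < β (w m) := fun m hm =>
      hβm (lt_of_lt_of_le hbig (hw m hm).1)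
    rcases Nat.eq_zero_or_pos i0 with rfl | hi0pos
    · have hd : 0 ≤ (v 1 - v 0) / h :=
        div_nonneg (by linarith [hmin 1 (by omega)]) hh.le
      have hμd : 0 ≤ μ ((v 1 - v 0) / h) := hμ0 ▸ hμm hd
      have e := hs.2.1
      have h1 : h / (2 * τ) * (β (v 0) - β (w 0)) < 0 := by
        apply mul_neg_of_pos_of_neg h2τ; linarith [hβlt 0 (by omega)]
      have h2 : α * v 0 < α * p := by
        apply mul_lt_mul_of_pos_left _ hα; linarith [hp.1]
      linarith
    · rcases eq_or_lt_of_le hi0N with rfl | hi0lt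
      · have hd : (v i0 - v (i0 - 1)) / h ≤ 0 :=
          div_nonpos_of_nonpos_of_nonneg (by linarith [hmin (i0-1) (by omega)]) hh.le
        have hμd : μ ((v i0 - v (i0 - 1)) / h) ≤ 0 := hμ0 ▸ hμm hd
        have e := hs.2.2
        have h1 : h / (2 * τ) * (β (v i0) - β (w i0)) < 0 := by
          apply mul_neg_of_pos_of_neg h2τ; linarith [hβlt i0 le_rfl]
        have h2 : α * v i0 < α * q := by
          apply mul_lt_mul_of_pos_left _ hα; linarith [hq.1]
        linarith
      · have e := hs.1 i0 hi0pos (by omega)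
        have hd1 : 0 ≤ (v (i0 + 1) - v i0) / h :=
          div_nonneg (by linarith [hmin (i0+1) (by omega)]) hh.le
        have hd2 : (v i0 - v (i0 - 1)) / h ≤ 0 :=
          div_nonpos_of_nonpos_of_nonneg (by linarith [hmin (i0-1) (by omega)]) hh.le
        have hμ1 : 0 ≤ μ ((v (i0 + 1) - v i0) / h) := hμ0 ▸ hμm hd1
        have hμ2 : μ ((v i0 - v (i0 - 1)) / h) ≤ 0 := hμ0 ▸ hμm hd2
        have h1 : h / τ * (β (v i0) - β (w i0)) < 0 := by
          apply mul_neg_of_pos_of_neg hτ'; linarith [hβlt i0 hi0N]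
        linarith
  exact fun i hi => ⟨hlo i hi, hup i hi⟩

lemma energy_step {β μ : ℝ → ℝ} (hβm : Monotone β) (hμc : Continuous μ) (hμm : Monotone μ)
    {h τ α : ℝ} (hh : 0 < h) (hτ : 0 < τ) (hα : 0 < α)
    {N : ℕ} (hN : 2 ≤ N) {p q : ℝ} {w v : ℕ → ℝ}
    (hs : DiscreteStep β μ h τ α N p q w v) :
    h * ∑ i ∈ Finset.Icc 1 N, Mf μ ((v i - v (i-1)) / h)
      ≤ h * ∑ i ∈ Finset.Icc 1 N, Mf μ ((w i - w (i-1)) / h)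
        + α * (p - v 0) * (v 0 - w 0) + α * (q - v N) * (v N - w N) := by
  obtain ⟨m, rfl⟩ : ∃ m, N = m + 2 := ⟨N - 2, by omega⟩
  set N := m + 2 with hNdef
  set F : ℕ → ℝ := fun i => μ ((v i - v (i-1)) / h) with hF
  set G : ℕ → ℝ := fun i => v i - w i with hG
  clear_value N F G
  have hβprod : ∀ a b : ℝ, 0 ≤ (β a - β b) * (a - b) := by
    intro a b
    rcases le_total a b with hab | hab
    · have h1 := hβm hab; nlinarith [mul_nonneg (sub_nonneg.mpr h1) (sub_nonneg.mpr hab)]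
    · have h1 := hβm hab; nlinarith [mul_nonneg (sub_nonneg.mpr h1) (sub_nonneg.mpr hab)]
  have hterm : ∀ i ∈ Finset.Icc 1 N,
      h * (Mf μ ((v i - v (i-1)) / h) - Mf μ ((w i - w (i-1)) / h)) ≤ F i * (G i - G (i-1)) := by
    intro i hi
    have hc := chain_ineq hμc hμm ((w i - w (i-1)) / h) ((v i - v (i-1)) / h)
    have hkey : h * (((v i - v (i-1)) / h) - ((w i - w (i-1)) / h)) = G i - G (i-1) := by
      field_simp [hG]
      simp only [hG]; ring
    calc h * (Mf μ ((v i - v (i-1)) / h) - Mf μ ((w i - w (i-1)) / h))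
        ≤ h * (μ ((v i - v (i-1)) / h) * (((v i - v (i-1)) / h) - ((w i - w (i-1)) / h))) :=
          by exact mul_le_mul_of_nonneg_left hc hh.le
      _ = F i * (G i - G (i-1)) := by rw [hF]; rw [← hkey]; ring
  have hsum1 : h * ∑ i ∈ Finset.Icc 1 N, Mf μ ((v i - v (i-1)) / h)
      - h * ∑ i ∈ Finset.Icc 1 N, Mf μ ((w i - w (i-1)) / h)
      ≤ ∑ i ∈ Finset.Icc 1 N, F i * (G i - G (i-1)) := by
    rw [Finset.mul_sum, Finset.mul_sum, ← Finset.sum_sub_distrib]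
    apply Finset.sum_le_sum
    intro i hi
    rw [← mul_sub]
    exact hterm i hi
  have hFsucc : ∀ i : ℕ, F (i+1) = μ ((v (i+1) - v i) / h) := by
    intro i; simp [hF]
  have hint : ∀ i ∈ Finset.Icc 1 (m+1), (F (i+1) - F i) * G i
      = h / τ * (β (v i) - β (w i)) * G i := by
    intro i hi
    rw [Finset.mem_Icc] at hi
    have e := hs.1 i hi.1 (by omega)
    rw [hFsucc]
    simp only [hF, hG]
    have : μ ((v (i + 1) - v i) / h) - μ ((v i - v (i - 1)) / h)
        = h / τ * (β (v i) - β (w i)) := by linarith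
    rw [this]
  have hbp := byparts F G (m+1)
  rw [Finset.sum_congr rfl hint] at hbp
  have e0 := hs.2.1
  have eN := hs.2.2
  have hF1 : F 1 = h / (2 * τ) * (β (v 0) - β (w 0)) + α * v 0 - α * p := by
    simp only [hF]; norm_num; linarith
  have hFN : F N = α * q - α * v N - h / (2 * τ) * (β (v N) - β (w N)) := by
    simp only [hF]; linarith
  have hsumpos : 0 ≤ ∑ i ∈ Finset.Icc 1 (m+1), h / τ * (β (v i) - β (w i)) * G i := by
    apply Finset.sum_nonneg
    intro i hi
    have := hβprod (v i) (w i)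
    have hpos : (0:ℝ) ≤ h / τ := by positivity
    calc (0:ℝ) ≤ h / τ * ((β (v i) - β (w i)) * (v i - w i)) := mul_nonneg hpos this
      _ = h / τ * (β (v i) - β (w i)) * G i := by rw [hG]; ring
  have hb0 : 0 ≤ (β (v 0) - β (w 0)) * G 0 := by
    have := hβprod (v 0) (w 0); simpa [hG] using this
  have hbN : 0 ≤ (β (v N) - β (w N)) * G N := by
    have := hβprod (v N) (w N); simpa [hG] using this
  have h2τ : (0:ℝ) ≤ h / (2 * τ) := by positivity
  have hNm : m + 1 + 1 = N := by omega
  rw [hNm] at hbp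
  have hbd : ∑ i ∈ Finset.Icc 1 N, F i * (G i - G (i-1))
      ≤ α * (p - v 0) * G 0 + α * (q - v N) * G N := by
    have h1 : F N * G N ≤ α * (q - v N) * G N := by
      rw [hFN]
      nlinarith [mul_nonneg h2τ hbN]
    have h2 : - (F 1 * G 0) ≤ α * (p - v 0) * G 0 := by
      rw [hF1]
      nlinarith [mul_nonneg h2τ hb0]
    linarith [hsumpos, hbp]
  have hgg : α * (p - v 0) * G 0 = α * (p - v 0) * (v 0 - w 0) := by rw [hG]
  have hgg2 : α * (q - v N) * G N = α * (q - v N) * (v N - w N) := by rw [hG]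
  linarith [hsum1, hbd, hgg.le, hgg2.le, hgg.ge, hgg2.ge]


set_option maxHeartbeats 1000000 in
/-- uniform gradient-energy bound,
`h ∑_{i=1}^N M(δᵢ^k) ≤ C` for all `t^k ≤ T`, where `M(s) = ∫₀^s μ(σ) dσ`, with `C`
independent of the mesh size and the time step. -/
theorem uniform_gradient_energy_bound
    (ℓ α T : ℝ) (hℓ : 0 < ℓ) (hα : 0 < α) (hT : 0 < T)
    (β : ℝ → ℝ) (hβc : Continuous β) (hβm : StrictMono β)
    (hβd : ∀ x : ℝ, 0 < x → DifferentiableAt ℝ β x)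
    (hβdc : ContinuousOn (deriv β) (Set.Ioi 0))
    (hβ' : ∀ x : ℝ, 0 < x → 0 < deriv β x)
    (hB : Tendsto (fun u : ℝ => (∫ s in (0:ℝ)..u, β s) / |u|) (cocompact ℝ) atTop)
    (μ : ℝ → ℝ) (hμc : Continuous μ) (hμ0 : μ 0 = 0)
    (hμd : ∀ s : ℝ, s ≠ 0 → DifferentiableAt ℝ μ s)
    (hμ' : ∀ s : ℝ, s ≠ 0 → 0 < deriv μ s)
    (ulow uup : ℝ) (hul : 0 < ulow) (hbnd : ulow ≤ uup)
    (u₀ : ℝ → ℝ) (K₀ : NNReal) (hu₀l : LipschitzOnWith K₀ u₀ (Set.Icc 0 ℓ))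
    (hu₀ : ∀ x ∈ Set.Icc 0 ℓ, ulow ≤ u₀ x ∧ u₀ x ≤ uup)
    (pbd qbd : ℝ → ℝ) (Kb : NNReal)
    (hpl : LipschitzWith Kb pbd) (hql : LipschitzWith Kb qbd)
    (hpb : ∀ t : ℝ, 0 ≤ t → ulow ≤ pbd t ∧ pbd t ≤ uup)
    (hqb : ∀ t : ℝ, 0 ≤ t → ulow ≤ qbd t ∧ qbd t ≤ uup) :
    ∃ C : ℝ, 0 < C ∧
      ∀ N : ℕ, 2 ≤ N → ∀ τ : ℝ, 0 < τ → τ < T → ∀ u : ℕ → ℕ → ℝ,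
        (∀ i ≤ N, u 0 i = u₀ (i * (ℓ / N))) →
        (∀ k : ℕ, 1 ≤ k →
          DiscreteStep β μ (ℓ / N) τ α N (pbd (k * τ)) (qbd (k * τ)) (u (k - 1)) (u k)) →
        ∀ k : ℕ, (k : ℝ) * τ ≤ T →
          (ℓ / N) * ∑ i ∈ Finset.Icc 1 N,
              (∫ σ in (0:ℝ)..((u k i - u k (i - 1)) / (ℓ / N)), μ σ) ≤ C := by
  have hμm : Monotone μ := mono_mu hμc hμ'
  set D := uup - ulow with hD
  have hD0 : 0 ≤ D := by rw [hD]; linarith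
  set M0 := Mf μ K₀ + Mf μ (-(K₀:ℝ)) with hM0
  have hM00 : 0 ≤ M0 :=
    add_nonneg (Mf_nonneg hμc hμm hμ0 _) (Mf_nonneg hμc hμm hμ0 _)
  set c := α * (2 * (Kb:ℝ) * D + (Kb:ℝ)^2 * T) with hc
  clear_value D M0 c
  have hc0 : 0 ≤ c := by
    rw [hc]
    apply mul_nonneg hα.le
    apply add_nonneg (mul_nonneg (by positivity) hD0) (by positivity)
  refine ⟨ℓ * M0 + α * D^2 + c * T + 1, ?_, ?_⟩
  · nlinarith [mul_nonneg hℓ.le hM00, mul_nonneg hα.le (sq_nonneg D), mul_nonneg hc0 hT.le]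
  intro N hN τ hτ hτT u hinit hstep k hkT
  set h := ℓ / (N:ℝ) with hh_def
  clear_value h
  have hNR : (0:ℝ) < N := by
    have : (2:ℝ) ≤ N := by exact_mod_cast hN
    linarith
  have hh : 0 < h := by rw [hh_def]; positivity
  -- uniform L∞ bounds by the discrete maximum principle
  have hbounds : ∀ j : ℕ, ∀ i ≤ N, ulow ≤ u j i ∧ u j i ≤ uup := by
    intro j
    induction j with
    | zero =>
      intro i hi
      rw [hinit i hi]
      apply hu₀
      constructor
      · positivity
      · calc (i:ℝ) * h ≤ (N:ℝ) * h := by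
              apply mul_le_mul_of_nonneg_right _ hh.le
              exact_mod_cast hi
          _ = ℓ := by rw [hh_def]; field_simp
    | succ n ih =>
      have hstep' := hstep (n+1) (by omega)
      simp only [Nat.add_sub_cancel] at hstep'
      exact maxprin hβm hμm hμ0 hh hτ hα hN ih
        (hpb _ (by positivity)) (hqb _ (by positivity)) hstep'
  -- energy and boundary Lyapunov terms
  set E : ℕ → ℝ := fun j => h * ∑ i ∈ Finset.Icc 1 N, Mf μ ((u j i - u j (i-1)) / h) with hE
  set Φ : ℕ → ℝ := fun j =>
    (pbd ((j:ℝ)*τ) - u j 0)^2/2 + (qbd ((j:ℝ)*τ) - u j N)^2/2 with hΦ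
  clear_value E Φ
  -- one-step estimate
  have claim : ∀ j : ℕ, E (j+1) + α * Φ (j+1) ≤ E j + α * Φ j + c * τ := by
    intro j
    have hstep' := hstep (j+1) (by omega)
    simp only [Nat.add_sub_cancel] at hstep'
    have hes := energy_step hβm.monotone hμc hμm hh hτ hα hN hstep'
    have hcast : ((j+1:ℕ):ℝ) = (j:ℝ) + 1 := by push_cast; ring
    have hjτ : (0:ℝ) ≤ (j:ℝ)*τ := by positivity
    -- boundary data Lipschitz bounds
    have hppr : |pbd (((j+1:ℕ):ℝ)*τ) - pbd ((j:ℝ)*τ)| ≤ (Kb:ℝ)*τ := by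
      have := hpl.dist_le_mul (((j+1:ℕ):ℝ)*τ) ((j:ℝ)*τ)
      rw [Real.dist_eq, Real.dist_eq] at this
      calc |pbd (((j+1:ℕ):ℝ)*τ) - pbd ((j:ℝ)*τ)| ≤ (Kb:ℝ) * |((j+1:ℕ):ℝ)*τ - (j:ℝ)*τ| := this
        _ = (Kb:ℝ)*τ := by
            rw [hcast]
            have : ((j:ℝ)+1)*τ - (j:ℝ)*τ = τ := by ring
            rw [this, abs_of_pos hτ]
    have hqpr : |qbd (((j+1:ℕ):ℝ)*τ) - qbd ((j:ℝ)*τ)| ≤ (Kb:ℝ)*τ := by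
      have := hql.dist_le_mul (((j+1:ℕ):ℝ)*τ) ((j:ℝ)*τ)
      rw [Real.dist_eq, Real.dist_eq] at this
      calc |qbd (((j+1:ℕ):ℝ)*τ) - qbd ((j:ℝ)*τ)| ≤ (Kb:ℝ) * |((j+1:ℕ):ℝ)*τ - (j:ℝ)*τ| := this
        _ = (Kb:ℝ)*τ := by
            rw [hcast]
            have : ((j:ℝ)+1)*τ - (j:ℝ)*τ = τ := by ring
            rw [this, abs_of_pos hτ]
    have hpw : |pbd ((j:ℝ)*τ) - u j 0| ≤ D := by
      have h1 := hpb _ hjτ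
      have h2 := hbounds j 0 (by omega)
      rw [hD]; apply abs_le.mpr; constructor <;> linarith [h1.1, h1.2, h2.1, h2.2]
    have hqw : |qbd ((j:ℝ)*τ) - u j N| ≤ D := by
      have h1 := hqb _ hjτ
      have h2 := hbounds j N le_rfl
      rw [hD]; apply abs_le.mpr; constructor <;> linarith [h1.1, h1.2, h2.1, h2.2]
    have b1 := bdry (pbd (((j+1:ℕ):ℝ)*τ)) (pbd ((j:ℝ)*τ)) (u (j+1) 0) (u j 0)
      D ((Kb:ℝ)*τ) hppr hpw
    have b2 := bdry (qbd (((j+1:ℕ):ℝ)*τ)) (qbd ((j:ℝ)*τ)) (u (j+1) N) (u j N)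
      D ((Kb:ℝ)*τ) hqpr hqw
    have A1 := mul_le_mul_of_nonneg_left b1 hα.le
    have A2 := mul_le_mul_of_nonneg_left b2 hα.le
    have htail : α * ((pbd ((j:ℝ)*τ) - u j 0)^2/2 + D*((Kb:ℝ)*τ) + ((Kb:ℝ)*τ)^2/2)
        + α * ((qbd ((j:ℝ)*τ) - u j N)^2/2 + D*((Kb:ℝ)*τ) + ((Kb:ℝ)*τ)^2/2)
        ≤ α * Φ j + c * τ := by
      simp only [hΦ, hc]
      have hnn : 0 ≤ (α * (Kb:ℝ)^2) * ((T - τ)*τ) :=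
        mul_nonneg (mul_nonneg hα.le (by positivity))
          (mul_nonneg (by linarith) hτ.le)
      nlinarith [hnn]
    have hEj : E (j+1) ≤ E j + α * (pbd (((j+1:ℕ):ℝ)*τ) - u (j+1) 0) * (u (j+1) 0 - u j 0)
        + α * (qbd (((j+1:ℕ):ℝ)*τ) - u (j+1) N) * (u (j+1) N - u j N) := by
      simp only [hE]
      exact hes
    have hΦj1 : Φ (j+1) = (pbd (((j+1:ℕ):ℝ)*τ) - u (j+1) 0)^2/2
        + (qbd (((j+1:ℕ):ℝ)*τ) - u (j+1) N)^2/2 := by simp only [hΦ]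
    rw [hΦj1]
    nlinarith [hEj, A1, A2, htail]
  -- iterate
  have total : ∀ j : ℕ, E j + α * Φ j ≤ E 0 + α * Φ 0 + c * ((j:ℝ) * τ) := by
    intro j
    induction j with
    | zero => simp
    | succ n ih =>
      have := claim n
      have hcast : ((n+1:ℕ):ℝ) = (n:ℝ) + 1 := by push_cast; ring
      have : c * (((n+1:ℕ):ℝ) * τ) = c * ((n:ℝ)*τ) + c * τ := by rw [hcast]; ring
      linarith [claim n, ih, this.le, this.ge]
  -- initial energy bound
  have hE0 : E 0 ≤ ℓ * M0 := by
    simp only [hE]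
    have hterm : ∀ i ∈ Finset.Icc 1 N, Mf μ ((u 0 i - u 0 (i-1)) / h) ≤ M0 := by
      intro i hi
      rw [Finset.mem_Icc] at hi
      rw [hinit i hi.2, hinit (i-1) (by omega)]
      rw [hM0]
      apply Mf_le hμc hμm hμ0
      have hx : (i:ℝ) * h ∈ Set.Icc 0 ℓ := by
        constructor
        · positivity
        · calc (i:ℝ) * h ≤ (N:ℝ) * h := by
                apply mul_le_mul_of_nonneg_right _ hh.le
                exact_mod_cast hi.2
            _ = ℓ := by rw [hh_def]; field_simp
      have hy : ((i-1:ℕ):ℝ) * h ∈ Set.Icc 0 ℓ := by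
        constructor
        · positivity
        · calc ((i-1:ℕ):ℝ) * h ≤ (N:ℝ) * h := by
                apply mul_le_mul_of_nonneg_right _ hh.le
                exact_mod_cast (by omega : i - 1 ≤ N)
            _ = ℓ := by rw [hh_def]; field_simp
      have hd := hu₀l.dist_le_mul _ hx _ hy
      rw [Real.dist_eq, Real.dist_eq] at hd
      have hcast : ((i-1:ℕ):ℝ) = (i:ℝ) - 1 := by
        rw [Nat.cast_sub hi.1]; norm_num
      have hxy : |(i:ℝ)*h - ((i-1:ℕ):ℝ)*h| = h := by
        rw [hcast]
        have : (i:ℝ)*h - ((i:ℝ)-1)*h = h := by ring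
        rw [this, abs_of_pos hh]
      rw [hxy] at hd
      rw [abs_div, abs_of_pos hh, div_le_iff₀ hh]
      exact hd
    calc h * ∑ i ∈ Finset.Icc 1 N, Mf μ ((u 0 i - u 0 (i-1)) / h)
        ≤ h * ((Finset.Icc 1 N).card • M0) := by
          apply mul_le_mul_of_nonneg_left _ hh.le
          exact Finset.sum_le_card_nsmul _ _ _ hterm
      _ = h * ((N:ℝ) * M0) := by rw [Nat.card_Icc]; simp [nsmul_eq_mul]
      _ = ℓ * M0 := by rw [hh_def]; field_simp
  -- initial boundary Lyapunov bound
  have hΦ0 : Φ 0 ≤ D^2 := by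
    simp only [hΦ]
    simp only [Nat.cast_zero, zero_mul]
    have hp0 := hpb 0 le_rfl
    have hq0 := hqb 0 le_rfl
    have hu00 := hbounds 0 0 (by omega)
    have huN := hbounds 0 N le_rfl
    rw [hD]
    nlinarith [mul_nonneg (by linarith [hp0.2, hu00.1] : (0:ℝ) ≤ uup - ulow - (pbd 0 - u 0 0))
        (by linarith [hp0.1, hu00.2] : (0:ℝ) ≤ uup - ulow + (pbd 0 - u 0 0)),
      mul_nonneg (by linarith [hq0.2, huN.1] : (0:ℝ) ≤ uup - ulow - (qbd 0 - u 0 N))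
        (by linarith [hq0.1, huN.2] : (0:ℝ) ≤ uup - ulow + (qbd 0 - u 0 N))]
  -- conclude
  have hΦk : 0 ≤ Φ k := by simp only [hΦ]; positivity
  have hfin : E k ≤ ℓ * M0 + α * D^2 + c * T + 1 := by
    have h1 := total k
    have h2 : c * ((k:ℝ)*τ) ≤ c * T := mul_le_mul_of_nonneg_left hkT hc0
    nlinarith [mul_nonneg hα.le hΦk, mul_le_mul_of_nonneg_left hΦ0 hα.le]
  simp only [hE, Mf] at hfin
  exact hfin
end

section
/- Well-posedness of the discrete stationary problem: for any boundary values p, q with u̲ ≤ p, q ≤ ū there exists a unique û ∈ ℝ^{N+1} satisfying, with δ_i = (û_i − û_{i−1})/h: μ(δ_{i+1}) − μ(δ_i) = 0 for 1 ≤ i ≤ N−1, −μ(δ_1) + α û_0 = α p, and μ(δ_N) + α û_N = α q. Moreover the differences δ_i are all equal to a common value b (so û is the nodal vector of an affine function û_i = û_0 + b·ih), u̲ ≤ û_i ≤ ū for all i, and |b| ≤ (ū − u̲)/ℓ. -/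
/-- Nodal equations of the P1 finite element discretization of the stationary
problem `-∂ₓ μ(∂ₓ uhat) = 0` on `(0,ℓ)` with Robin boundary conditions, on a uniform
grid with `N + 1` nodes and mesh size `h`. -/
def DiscreteStationary (μ : ℝ → ℝ) (h α : ℝ) (N : ℕ) (p q : ℝ) (v : ℕ → ℝ) : Prop :=
  (∀ i : ℕ, 1 ≤ i → i ≤ N - 1 →
      μ ((v (i + 1) - v i) / h) - μ ((v i - v (i - 1)) / h) = 0) ∧
    -μ ((v 1 - v 0) / h) + α * v 0 = α * p ∧
    μ ((v N - v (N - 1)) / h) + α * v N = α * q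

set_option maxHeartbeats 1600000 in
/-- well-posedness of the discrete stationary problem. For boundary
values `p, q ∈ [u̲, ū]` there is exactly one solution `uhat ∈ ℝ^{N+1}`; moreover `uhat` is
the nodal vector of an affine function with slope `b`, takes values in `[u̲, ū]`, and
`|b| ≤ (ū - u̲)/ℓ`. -/
theorem discrete_stationary_wellposed
    (ℓ α : ℝ) (hℓ : 0 < ℓ) (hα : 0 < α)
    (N : ℕ) (hN : 2 ≤ N) (h : ℝ) (hh : h = ℓ / N)
    (μ : ℝ → ℝ) (hμc : Continuous μ) (hμm : StrictMono μ) (hμ0 : μ 0 = 0)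
    (ulow uup : ℝ) (hul : 0 < ulow) (hbnd : ulow ≤ uup)
    (p q : ℝ) (hp : ulow ≤ p ∧ p ≤ uup) (hq : ulow ≤ q ∧ q ≤ uup) :
    ∃ uhat : ℕ → ℝ, ∃ b : ℝ,
      DiscreteStationary μ h α N p q uhat ∧
      (∀ i : ℕ, 1 ≤ i → i ≤ N → (uhat i - uhat (i - 1)) / h = b) ∧
      (∀ i ≤ N, uhat i = uhat 0 + b * (i * h)) ∧
      (∀ i ≤ N, ulow ≤ uhat i ∧ uhat i ≤ uup) ∧
      |b| ≤ (uup - ulow) / ℓ ∧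
      (∀ v : ℕ → ℝ, DiscreteStationary μ h α N p q v → ∀ i ≤ N, v i = uhat i) := by
  obtain ⟨hp1, hp2⟩ := hp
  obtain ⟨hq1, hq2⟩ := hq
  have hNpos : (0:ℝ) < (N:ℝ) := by
    have : (2:ℝ) ≤ (N:ℝ) := by exact_mod_cast hN
    linarith
  have hh0 : 0 < h := by rw [hh]; positivity
  have hNh : (N:ℝ) * h = ℓ := by
    rw [hh]; field_simp
  -- the slope equation F b = α (q - p)
  set F : ℝ → ℝ := fun b => 2 * μ b + α * ℓ * b with hFdef
  clear_value F
  have hFmono : StrictMono F := by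
    intro x y hxy
    have h1 := hμm hxy
    have h2 : α * ℓ * x < α * ℓ * y := by
      have := mul_pos hα hℓ
      nlinarith
    rw [hFdef]
    dsimp only
    linarith
  have hFc : Continuous F := by
    rw [hFdef]
    exact ((continuous_const.mul hμc).add (continuous_const.mul continuous_id))
  have hF0 : F 0 = 0 := by simp [hFdef, hμ0]
  set d : ℝ := (q - p) / ℓ with hddef
  clear_value d
  have hFd : F d = 2 * μ d + α * (q - p) := by
    rw [hFdef, hddef]
    dsimp only
    field_simp
  have hmem : α * (q - p) ∈ Set.uIcc (F 0) (F d) := by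
    rw [hF0]
    rcases le_total p q with hpq | hpq
    · have hd0 : 0 ≤ d := by
        rw [hddef]
        exact div_nonneg (by linarith) hℓ.le
      have hμd : 0 ≤ μ d := by
        have := hμm.monotone hd0
        rwa [hμ0] at this
      have h1 : 0 ≤ α * (q - p) := by nlinarith
      have h2 : α * (q - p) ≤ F d := by rw [hFd]; linarith
      exact Set.mem_uIcc.mpr (Or.inl ⟨h1, h2⟩)
    · have hd0 : d ≤ 0 := by
        rw [hddef]
        apply div_nonpos_of_nonpos_of_nonneg <;> linarith
      have hμd : μ d ≤ 0 := by
        have := hμm.monotone hd0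
        rwa [hμ0] at this
      have h1 : α * (q - p) ≤ 0 := by nlinarith
      have h2 : F d ≤ α * (q - p) := by rw [hFd]; linarith
      exact Set.mem_uIcc.mpr (Or.inr ⟨h2, h1⟩)
  obtain ⟨b, hbmem, hFb⟩ := intermediate_value_uIcc hFc.continuousOn hmem
  have hFb : 2 * μ b + α * ℓ * b = α * (q - p) := by rw [hFdef] at hFb; exact hFb
  -- bound on |b|
  have habsb : |b| ≤ (uup - ulow) / ℓ := by
    have hd_abs : |d| ≤ (uup - ulow) / ℓ := by
      rw [hddef, abs_div, abs_of_pos hℓ]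
      gcongr
      rw [abs_le]; constructor <;> linarith
    rw [Set.uIcc_eq_union] at hbmem
    have : |b| ≤ |d| := by
      rcases hbmem with hb | hb
      · obtain ⟨h1, h2⟩ := hb
        rw [abs_le]; constructor
        · linarith [neg_abs_le d, abs_nonneg d]
        · linarith [le_abs_self d, abs_nonneg d]
      · obtain ⟨h1, h2⟩ := hb
        rw [abs_le]; constructor
        · linarith [neg_abs_le d, abs_nonneg d]
        · linarith [le_abs_self d, abs_nonneg d]
    linarith
  -- the candidate solution
  set u0 : ℝ := p + μ b / α with hu0def
  clear_value u0
  set uhat : ℕ → ℝ := fun i => u0 + b * (i * h) with huhatdef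
  clear_value uhat
  have hδ : ∀ i : ℕ, 1 ≤ i → (uhat i - uhat (i - 1)) / h = b := by
    intro i hi
    have hcast : ((i - 1 : ℕ) : ℝ) = (i : ℝ) - 1 := by
      rw [Nat.cast_sub hi, Nat.cast_one]
    simp only [huhatdef, hcast]
    field_simp
    ring
  have huhat0 : uhat 0 = u0 := by simp [huhatdef]
  have hsign : ∀ i : ℕ, i ≤ N → ulow ≤ uhat i ∧ uhat i ≤ uup := by
    intro i hi
    have hih : 0 ≤ (i:ℝ) * h := by positivity
    have hihℓ : (i:ℝ) * h ≤ ℓ := by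
      rw [← hNh]
      have : (i:ℝ) ≤ (N:ℝ) := by exact_mod_cast hi
      nlinarith
    rcases le_total 0 b with hb0 | hb0
    · have hμb : 0 ≤ μ b := by
        have := hμm.monotone hb0; rwa [hμ0] at this
      constructor
      · simp only [huhatdef, hu0def]
        have : 0 ≤ μ b / α := by positivity
        nlinarith
      · -- uhat i ≤ u0 + b * ℓ = q - μ b / α ≤ q
        have huN : u0 + b * ℓ = q - μ b / α := by
          rw [hu0def]
          field_simp
          linarith [hFb]
        simp only [huhatdef]
        have h1 : u0 + b * ((i:ℝ) * h) ≤ u0 + b * ℓ := by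
          have := mul_le_mul_of_nonneg_left hihℓ hb0
          linarith
        have h2 : 0 ≤ μ b / α := by positivity
        rw [huN] at h1
        linarith
    · have hμb : μ b ≤ 0 := by
        have := hμm.monotone hb0; rwa [hμ0] at this
      constructor
      · have huN : u0 + b * ℓ = q - μ b / α := by
          rw [hu0def]
          field_simp
          linarith [hFb]
        simp only [huhatdef]
        have h1 : u0 + b * ℓ ≤ u0 + b * ((i:ℝ) * h) := by
          have := mul_le_mul_of_nonpos_left hihℓ hb0
          linarith
        have h2 : μ b / α ≤ 0 := div_nonpos_of_nonpos_of_nonneg hμb hα.le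
        rw [huN] at h1
        linarith
      · simp only [huhatdef, hu0def]
        have h2 : μ b / α ≤ 0 := div_nonpos_of_nonpos_of_nonneg hμb hα.le
        nlinarith
  have hds : DiscreteStationary μ h α N p q uhat := by
    refine ⟨?_, ?_, ?_⟩
    · intro i h1 h2
      have e1 : (uhat (i + 1) - uhat ((i+1) - 1)) / h = b := hδ (i+1) (by omega)
      simp only [Nat.add_sub_cancel] at e1
      rw [e1, hδ i h1]
      ring
    · have e1 := hδ 1 le_rfl
      norm_num at e1
      rw [e1, huhat0, hu0def]
      field_simp
      ring
    · have e1 := hδ N (by omega)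
      rw [e1]
      have huN : uhat N = q - μ b / α := by
        simp only [huhatdef, hNh, hu0def]
        field_simp
        linarith [hFb]
      rw [huN]
      field_simp
      ring
  have haff : ∀ i ≤ N, uhat i = uhat 0 + b * (i * h) := by
    intro i _
    simp [huhatdef]
  -- uniqueness
  have huniq : ∀ v : ℕ → ℝ, DiscreteStationary μ h α N p q v → ∀ i ≤ N, v i = uhat i := by
    intro v hv
    obtain ⟨hvint, hvl, hvr⟩ := hv
    set b' : ℝ := (v 1 - v 0) / h with hb'def
    have hvδ : ∀ i : ℕ, 1 ≤ i → i ≤ N → (v i - v (i - 1)) / h = b' := by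
      intro i
      induction i with
      | zero => omega
      | succ j ih =>
        intro h1 h2
        rcases Nat.eq_zero_or_pos j with hj | hj
        · subst hj; simp [hb'def]
        · have ihj := ih hj (by omega)
          have hint := hvint j hj (by omega)
          have : μ ((v (j + 1) - v j) / h) = μ ((v j - v (j - 1)) / h) := by linarith
          have := hμm.injective this
          simp only [Nat.add_sub_cancel]
          rw [this, ihj]
    have hvaff : ∀ i ≤ N, v i = v 0 + b' * (i * h) := by
      intro i
      induction i with
      | zero => intro _; simp
      | succ j ih =>
        intro h1
        have ihj := ih (by omega)
        have e1 := hvδ (j+1) (by omega) h1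
        simp only [Nat.add_sub_cancel] at e1
        have : v (j+1) = v j + b' * h := by
          field_simp at e1
          linarith
        rw [this, ihj]
        push_cast
        ring
    have hvN : v N = v 0 + b' * ℓ := by
      rw [hvaff N le_rfl, hNh]
    have hvrN : μ b' + α * v N = α * q := by
      rw [← hvδ N (by omega) le_rfl]
      exact hvr
    have hvl' : -μ b' + α * v 0 = α * p := hvl
    have hFb' : 2 * μ b' + α * ℓ * b' = α * (q - p) := by
      rw [hvN] at hvrN
      nlinarith
    have hbb : b' = b := hFmono.injective (by rw [hFdef]; dsimp only; rw [hFb', hFb])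
    have hv0 : v 0 = u0 := by
      rw [hbb] at hvl'
      rw [hu0def]
      field_simp
      linarith
    intro i hi
    rw [hvaff i hi, hbb, hv0]
    simp [huhatdef]
  exact ⟨uhat, b, hds, fun i h1 _ => hδ i h1, haff, hsign, habsb, huniq⟩
end

section
/- The continuous stationary problem has a unique affine solution: for any p, q ∈ ℝ there exists a unique pair (a, b) ∈ ℝ² such that −μ(b) + α a = α p and μ(b) + α(a + bℓ) = α q; equivalently, û(x) = a + bx is the unique affine solution of −∂_x μ(∂_x û) = 0 with Robin boundary conditions −μ(û'(0)) + αû(0) = αp and μ(û'(ℓ)) + αû(ℓ) = αq. Moreover, if u̲ ≤ p, q ≤ ū then u̲ ≤ a + bx ≤ ū for all x ∈ [0,ℓ] and |b| ≤ (ū − u̲)/ℓ. -/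
/-- the continuous stationary problem `-∂ₓ μ(∂ₓ û) = 0` on `(0,ℓ)`
with Robin boundary conditions has a unique affine solution `û(x) = a + b x`,
determined by `-μ(b) + α a = α p` and `μ(b) + α (a + b ℓ) = α q`; moreover, if
`u̲ ≤ p, q ≤ ū` then `u̲ ≤ a + b x ≤ ū` on `[0,ℓ]` and `|b| ≤ (ū - u̲)/ℓ`. -/
theorem continuous_stationary_wellposed
    (ℓ α : ℝ) (hℓ : 0 < ℓ) (hα : 0 < α)
    (μ : ℝ → ℝ) (hμc : Continuous μ) (hμm : StrictMono μ) (hμ0 : μ 0 = 0)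
    (ulow uup : ℝ) (hul : 0 < ulow) (hbnd : ulow ≤ uup)
    (p q : ℝ) :
    (∃! ab : ℝ × ℝ, -μ ab.2 + α * ab.1 = α * p ∧ μ ab.2 + α * (ab.1 + ab.2 * ℓ) = α * q) ∧
    (∀ a b : ℝ, -μ b + α * a = α * p → μ b + α * (a + b * ℓ) = α * q →
      ulow ≤ p → p ≤ uup → ulow ≤ q → q ≤ uup →
      (∀ x ∈ Set.Icc (0:ℝ) ℓ, ulow ≤ a + b * x ∧ a + b * x ≤ uup) ∧
        |b| ≤ (uup - ulow) / ℓ) := by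
  have hαℓ : 0 < α * ℓ := mul_pos hα hℓ
  have hα0 : α ≠ 0 := ne_of_gt hα
  set g : ℝ → ℝ := fun b => 2 * μ b + α * ℓ * b with hgdef
  have hgm : StrictMono g := by
    intro x y hxy
    have h1 := hμm hxy
    have h2 : α * ℓ * x < α * ℓ * y := by nlinarith
    simp only [g]
    linarith
  have hgc : Continuous g := by
    apply Continuous.add
    · exact continuous_const.mul hμc
    · exact continuous_const.mul continuous_id
  set c : ℝ := α * (q - p) with hcdef
  obtain ⟨b, hb⟩ : ∃ b, g b = c := by
    set M := c / (α * ℓ) with hMdef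
    have hM : α * ℓ * M = c := mul_div_cancel₀ c (ne_of_gt hαℓ)
    have hμB : 0 ≤ μ (max 0 M) := by
      have := hμm.monotone (le_max_left 0 M); rw [hμ0] at this; exact this
    have hμA : μ (min 0 M) ≤ 0 := by
      have := hμm.monotone (min_le_left 0 M); rw [hμ0] at this; exact this
    have hB : c ≤ g (max 0 M) := by
      have h := mul_le_mul_of_nonneg_left (le_max_right 0 M) hαℓ.le
      simp only [g]; linarith
    have hA : g (min 0 M) ≤ c := by
      have h := mul_le_mul_of_nonneg_left (min_le_right 0 M) hαℓ.le
      simp only [g]; linarith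
    have hAB : min 0 M ≤ max 0 M := (min_le_left 0 M).trans (le_max_left 0 M)
    obtain ⟨b, _, hb⟩ := intermediate_value_Icc hAB hgc.continuousOn ⟨hA, hB⟩
    exact ⟨b, hb⟩
  have hgb : 2 * μ b + α * ℓ * b = α * (q - p) := hb
  constructor
  · refine ⟨⟨p + μ b / α, b⟩, ⟨?_, ?_⟩, ?_⟩
    · show -μ b + α * (p + μ b / α) = α * p
      field_simp
      ring
    · show μ b + α * ((p + μ b / α) + b * ℓ) = α * q
      field_simp
      nlinarith [hgb]
    · rintro ⟨a', b'⟩ ⟨h1, h2⟩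
      simp only at h1 h2
      have hgb' : g b' = c := by
        simp only [g, hcdef]
        nlinarith [h1, h2]
      have hbb : b' = b := hgm.injective (hgb'.trans hb.symm)
      have ha : a' = p + μ b / α := by
        subst hbb
        field_simp at h1 ⊢
        linarith
      exact Prod.ext ha hbb
  · intro a b' h1 h2 hp1 hp2 hq1 hq2
    rcases le_or_gt 0 b' with hb0 | hb0
    · have hμb : 0 ≤ μ b' := by
        have := hμm.monotone hb0; rw [hμ0] at this; exact this
      have ha : p ≤ a := by nlinarith
      have haL : a + b' * ℓ ≤ q := by nlinarith
      constructor
      · rintro x ⟨hx0, hxℓ⟩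
        have h3 : 0 ≤ b' * x := mul_nonneg hb0 hx0
        have h4 : b' * x ≤ b' * ℓ := mul_le_mul_of_nonneg_left hxℓ hb0
        exact ⟨by linarith, by linarith⟩
      · rw [abs_of_nonneg hb0, le_div_iff₀ hℓ]
        linarith
    · have hμb : μ b' ≤ 0 := by
        have := hμm.monotone hb0.le; rw [hμ0] at this; exact this
      have ha : a ≤ p := by nlinarith
      have haL : q ≤ a + b' * ℓ := by nlinarith
      constructor
      · rintro x ⟨hx0, hxℓ⟩
        have h3 : b' * x ≤ 0 := mul_nonpos_of_nonpos_of_nonneg hb0.le hx0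
        have h4 : b' * ℓ ≤ b' * x := by nlinarith
        exact ⟨by linarith, by linarith⟩
      · rw [abs_of_neg hb0, le_div_iff₀ hℓ]
        linarith
end

section
/- Lower bound for the monotonicity defect of μ: let C > 0 and set m = inf{μ'(s) : 0 < |s| ≤ C + 1}, assumed positive. Then for all y, z ∈ ℝ with |z| ≤ C one has (μ(y) − μ(z))·(y − z) ≥ m·F(y,z), where F(y,z) = |y − z|² if |y − z| ≤ 1 and F(y,z) = |y − z| if |y − z| > 1 (i.e. F(y,z) = min(|y − z|², |y − z|)). -/
section Aux

variable (μ : ℝ → ℝ) (hμc : Continuous μ)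
  (hμd : ∀ s : ℝ, s ≠ 0 → DifferentiableAt ℝ μ s)
  (hμ' : ∀ s : ℝ, s ≠ 0 → 0 < deriv μ s)
  (C m : ℝ)
  (hm : m = sInf {d : ℝ | ∃ s : ℝ, s ≠ 0 ∧ |s| ≤ C + 1 ∧ d = deriv μ s})

include hμc hμd hμ' in
lemma mdlb_mono : Monotone μ := by
  have h1 : StrictMonoOn μ (Set.Iic 0) := by
    apply strictMonoOn_of_deriv_pos (convex_Iic 0) hμc.continuousOn
    intro x hx
    rw [interior_Iic] at hx
    exact hμ' x (ne_of_lt hx)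
  have h2 : StrictMonoOn μ (Set.Ici 0) := by
    apply strictMonoOn_of_deriv_pos (convex_Ici 0) hμc.continuousOn
    intro x hx
    rw [interior_Ici] at hx
    exact hμ' x (ne_of_gt hx)
  intro a b hab
  rcases le_total b 0 with hb | hb
  · exact (h1.monotoneOn (le_trans hab hb) hb hab)
  · rcases le_total 0 a with ha | ha
    · exact h2.monotoneOn ha (le_trans ha hab) hab
    · exact le_trans (h1.monotoneOn ha Set.self_mem_Iic ha)
        (h2.monotoneOn Set.self_mem_Ici hb hb)

include hμc hμd hμ' hm in
lemma mdlb_slope_nz (a b : ℝ) (hab : a < b)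
    (hnz : ∀ s ∈ Set.Ioo a b, s ≠ 0)
    (ha : -(C+1) ≤ a) (hb : b ≤ C+1) :
    m * (b - a) ≤ μ b - μ a := by
  obtain ⟨c, hc, hderiv⟩ := exists_deriv_eq_slope μ hab hμc.continuousOn
    (fun s hs => (hμd s (hnz s hs)).differentiableWithinAt)
  have hc0 : c ≠ 0 := hnz c hc
  have hcabs : |c| ≤ C + 1 := abs_le.mpr ⟨le_of_lt (lt_of_le_of_lt ha hc.1),
    le_of_lt (lt_of_lt_of_le hc.2 hb)⟩
  have hbdd : BddBelow {d : ℝ | ∃ s : ℝ, s ≠ 0 ∧ |s| ≤ C + 1 ∧ d = deriv μ s} := by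
    refine ⟨0, fun d hd => ?_⟩
    obtain ⟨s, hs0, _, rfl⟩ := hd
    exact le_of_lt (hμ' s hs0)
  have hmle : m ≤ deriv μ c := by
    rw [hm]; exact csInf_le hbdd ⟨c, hc0, hcabs, rfl⟩
  have : μ b - μ a = deriv μ c * (b - a) := by
    rw [hderiv, div_mul_cancel₀ _ (by linarith : b - a ≠ 0)]
  rw [this]
  exact mul_le_mul_of_nonneg_right hmle (by linarith)

include hμc hμd hμ' hm in
lemma mdlb_key (hμ0 : μ 0 = 0) (a b : ℝ) (hab : a ≤ b)
    (ha : -(C+1) ≤ a) (hb : b ≤ C+1) :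
    m * (b - a) ≤ μ b - μ a := by
  rcases eq_or_lt_of_le hab with rfl | hab
  · simp
  rcases le_or_gt b 0 with h | h
  · exact mdlb_slope_nz μ hμc hμd hμ' C m hm a b hab
      (fun s hs => ne_of_lt (lt_of_lt_of_le hs.2 h)) ha hb
  rcases le_or_gt 0 a with h' | h'
  · exact mdlb_slope_nz μ hμc hμd hμ' C m hm a b hab
      (fun s hs => ne_of_gt (lt_of_le_of_lt h' hs.1)) ha hb
  · have h1 : m * (0 - a) ≤ μ 0 - μ a :=
      mdlb_slope_nz μ hμc hμd hμ' C m hm a 0 h'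
        (fun s hs => ne_of_lt hs.2) ha (by linarith)
    have h2 : m * (b - 0) ≤ μ b - μ 0 :=
      mdlb_slope_nz μ hμc hμd hμ' C m hm 0 b h
        (fun s hs => ne_of_gt hs.1) (by linarith) hb
    linarith

end Aux

/-- lower bound for the monotonicity defect of `μ`. Let `C > 0`
and let `m = inf {μ'(s) : 0 < |s| ≤ C + 1}` be positive. Then for all `y, z` with
`|z| ≤ C` one has `(μ(y) - μ(z))(y - z) ≥ m · F(y,z)` with
`F(y,z) = min(|y - z|², |y - z|)`. -/
theorem monotonicity_defect_lower_bound
    (μ : ℝ → ℝ) (hμc : Continuous μ) (hμ0 : μ 0 = 0)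
    (hμd : ∀ s : ℝ, s ≠ 0 → DifferentiableAt ℝ μ s)
    (hμ' : ∀ s : ℝ, s ≠ 0 → 0 < deriv μ s)
    (C m : ℝ) (hC : 0 < C)
    (hm : m = sInf {d : ℝ | ∃ s : ℝ, s ≠ 0 ∧ |s| ≤ C + 1 ∧ d = deriv μ s})
    (hmpos : 0 < m) :
    ∀ y z : ℝ, |z| ≤ C →
      m * min (|y - z| ^ 2) |y - z| ≤ (μ y - μ z) * (y - z) := by
  intro y z hz
  have key := mdlb_key μ hμc hμd hμ' C m hm hμ0
  have mono := mdlb_mono μ hμc hμd hμ'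
  rw [abs_le] at hz
  rcases le_total z y with hzy | hzy
  · -- y ≥ z, d = y - z ≥ 0
    have hd : 0 ≤ y - z := by linarith
    rw [abs_of_nonneg hd]
    rcases le_total (y - z) 1 with h1 | h1
    · -- |y-z| ≤ 1, min ≤ (y-z)^2
      have hk : m * (y - z) ≤ μ y - μ z :=
        key z y hzy (by linarith) (by linarith)
      have : min ((y-z)^2) (y-z) ≤ (y-z)^2 := min_le_left _ _
      nlinarith
    · -- |y-z| > 1
      have hmin : min ((y-z)^2) (y-z) = y - z := by
        apply min_eq_right; nlinarith
      rw [hmin]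
      have hk : m * ((z+1) - z) ≤ μ (z+1) - μ z :=
        key z (z+1) (by linarith) (by linarith) (by linarith)
      have hmy : μ (z+1) ≤ μ y := mono (by linarith)
      nlinarith
  · -- y ≤ z
    have hd : y - z ≤ 0 := by linarith
    rw [abs_of_nonpos hd]
    rcases le_total (z - y) 1 with h1 | h1
    · have hk : m * (z - y) ≤ μ z - μ y :=
        key y z hzy (by linarith) (by linarith)
      have : min ((-(y-z))^2) (-(y-z)) ≤ (-(y-z))^2 := min_le_left _ _
      nlinarith
    · have hmin : min ((-(y-z))^2) (-(y-z)) = -(y-z) := by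
        apply min_eq_right; nlinarith
      rw [hmin]
      have hk : m * (z - (z-1)) ≤ μ z - μ (z-1) :=
        key (z-1) z (by linarith) (by linarith) (by linarith)
      have hmy : μ y ≤ μ (z-1) := mono (by linarith)
      nlinarith
end

section
/- A nonlinear Poincaré-type inequality: for every ℓ > 0 there exists a constant c > 0 depending only on ℓ such that for every integrable function φ : (0,ℓ) → ℝ and every g : [0,ℓ] → ℝ with g(x) = g(0) + ∫₀^x φ(y) dy for all x ∈ [0,ℓ], one has ∫₀^ℓ g(x)² dx ≤ c·N( g(0)² + g(ℓ)² + ∫₀^ℓ min(φ(x)², |φ(x)|) dx ), where N(x) = x + x². -/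
open MeasureTheory

/-- Pointwise bound: for `0 < ε ≤ 1`, `|t| ≤ min(t², |t|)/ε + ε`. -/
lemma abs_le_min_div_add {t ε : ℝ} (hε : 0 < ε) (hε1 : ε ≤ 1) :
    |t| ≤ min (t ^ 2) |t| / ε + ε := by
  rcases le_or_gt |t| ε with h | h
  · have h0 : 0 ≤ min (t ^ 2) |t| := le_min (sq_nonneg t) (abs_nonneg t)
    have : 0 ≤ min (t ^ 2) |t| / ε := div_nonneg h0 hε.le
    linarith
  · rcases le_total (t ^ 2) |t| with hm | hm
    · rw [min_eq_left hm]
      rw [div_add' _ _ _ hε.ne', le_div_iff₀ hε]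
      have hmul : |t| * ε ≤ |t| * |t| := mul_le_mul_of_nonneg_left h.le (abs_nonneg t)
      nlinarith [sq_abs t, sq_nonneg ε]
    · rw [min_eq_right hm]
      have : |t| ≤ |t| / ε := by
        rw [le_div_iff₀ hε]
        nlinarith [abs_nonneg t]
      linarith

/-- a nonlinear Poincaré-type inequality. For every `ℓ > 0` there
is `c > 0` (depending only on `ℓ`) such that for every integrable `φ` on `(0,ℓ)` and
every `g` with `g(x) = g(0) + ∫₀ˣ φ`, one has
`∫₀^ℓ g² ≤ c · N(g(0)² + g(ℓ)² + ∫₀^ℓ min(φ², |φ|))` where `N(x) = x + x²`. -/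
theorem nonlinear_poincare_inequality :
    ∀ ℓ : ℝ, 0 < ℓ → ∃ c : ℝ, 0 < c ∧
      ∀ φ g : ℝ → ℝ, IntegrableOn φ (Set.Ioc 0 ℓ) →
        (∀ x ∈ Set.Icc (0:ℝ) ℓ, g x = g 0 + ∫ y in (0:ℝ)..x, φ y) →
        ∫ x in (0:ℝ)..ℓ, g x ^ 2 ≤
          c * ((g 0 ^ 2 + g ℓ ^ 2 + ∫ x in (0:ℝ)..ℓ, min (φ x ^ 2) |φ x|) +
               (g 0 ^ 2 + g ℓ ^ 2 + ∫ x in (0:ℝ)..ℓ, min (φ x ^ 2) |φ x|) ^ 2) := by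
  intro ℓ hℓ
  refine ⟨2 * ℓ * (1 + (1 + ℓ) ^ 2), by positivity, ?_⟩
  intro φ g hφ hg
  have hvol : (volume (Set.Ioc (0:ℝ) ℓ)).toReal = ℓ := by
    rw [Real.volume_Ioc, sub_zero, ENNReal.toReal_ofReal hℓ.le]
  have hvolfin : volume (Set.Ioc (0:ℝ) ℓ) < ⊤ := by
    rw [Real.volume_Ioc]; exact ENNReal.ofReal_lt_top
  -- basic integrabilities
  have hφabs : IntegrableOn (fun x => |φ x|) (Set.Ioc 0 ℓ) := hφ.abs
  have hmin_meas : AEStronglyMeasurable (fun x => min (φ x ^ 2) |φ x|)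
      (volume.restrict (Set.Ioc (0:ℝ) ℓ)) := by
    have h1 : AEMeasurable φ (volume.restrict (Set.Ioc (0:ℝ) ℓ)) := hφ.aemeasurable
    exact ((h1.pow_const 2).min (continuous_abs.measurable.comp_aemeasurable h1)).aestronglyMeasurable
  have hmin_int : IntegrableOn (fun x => min (φ x ^ 2) |φ x|) (Set.Ioc 0 ℓ) := by
    refine Integrable.mono hφabs hmin_meas (Filter.Eventually.of_forall fun x => ?_)
    have h0 : (0:ℝ) ≤ min (φ x ^ 2) |φ x| := le_min (sq_nonneg _) (abs_nonneg _)
    rw [Real.norm_eq_abs, Real.norm_eq_abs, abs_of_nonneg h0, abs_abs]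
    exact min_le_right _ _
  set I := ∫ x in (0:ℝ)..ℓ, min (φ x ^ 2) |φ x| with hIdef
  have hIset : I = ∫ x in Set.Ioc (0:ℝ) ℓ, min (φ x ^ 2) |φ x| :=
    intervalIntegral.integral_of_le hℓ.le
  have hI0 : 0 ≤ I := by
    rw [hIset]
    exact setIntegral_nonneg measurableSet_Ioc fun x _ => le_min (sq_nonneg _) (abs_nonneg _)
  set A := ∫ x in Set.Ioc (0:ℝ) ℓ, |φ x| with hAdef
  have hA0 : 0 ≤ A :=
    setIntegral_nonneg measurableSet_Ioc fun x _ => abs_nonneg _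
  -- key estimate: A ≤ I/ε + ε ℓ for 0 < ε ≤ 1
  have hAε : ∀ ε : ℝ, 0 < ε → ε ≤ 1 → A ≤ I / ε + ε * ℓ := by
    intro ε hε hε1
    have hint : Integrable (fun x => min (φ x ^ 2) |φ x| / ε + ε)
        (volume.restrict (Set.Ioc (0:ℝ) ℓ)) := by
      exact (hmin_int.div_const ε).add (integrable_const ε)
    have hmono : A ≤ ∫ x in Set.Ioc (0:ℝ) ℓ, (min (φ x ^ 2) |φ x| / ε + ε) := by
      refine integral_mono hφabs hint fun x => ?_
      exact abs_le_min_div_add hε hε1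
    have heq : ∫ x in Set.Ioc (0:ℝ) ℓ, (min (φ x ^ 2) |φ x| / ε + ε) = I / ε + ε * ℓ := by
      rw [integral_add (hmin_int.div_const ε) (integrable_const ε), integral_div,
        setIntegral_const, measureReal_def, hvol, hIset, smul_eq_mul]
      ring
    linarith [heq ▸ hmono]
  -- consequence: A² ≤ (1+ℓ)² (I + I²)
  have hA2 : A ^ 2 ≤ (1 + ℓ) ^ 2 * (I + I ^ 2) := by
    rcases eq_or_lt_of_le hI0 with hI | hI
    · -- I = 0 : A = 0
      have hA_le : A ≤ 0 := by
        refine le_of_forall_pos_le_add fun ε hε => ?_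
        have hδ : 0 < min 1 (ε / ℓ) := lt_min one_pos (div_pos hε hℓ)
        have h := hAε (min 1 (ε / ℓ)) hδ (min_le_left _ _)
        rw [← hI, zero_div] at h
        have : min 1 (ε / ℓ) * ℓ ≤ (ε / ℓ) * ℓ :=
          mul_le_mul_of_nonneg_right (min_le_right _ _) hℓ.le
        rw [div_mul_cancel₀ _ hℓ.ne'] at this
        linarith
      have : A = 0 := le_antisymm hA_le hA0
      rw [this]
      nlinarith [sq_nonneg (1 + ℓ), sq_nonneg I]
    · rcases le_or_gt I 1 with h1 | h1
      · -- 0 < I ≤ 1 : take ε = √I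
        have hs : 0 < Real.sqrt I := Real.sqrt_pos.2 hI
        have h := hAε (Real.sqrt I) hs (Real.sqrt_le_one.2 h1)
        rw [Real.div_sqrt] at h
        have hA_le : A ≤ (1 + ℓ) * Real.sqrt I := by nlinarith
        have : A ^ 2 ≤ ((1 + ℓ) * Real.sqrt I) ^ 2 := by
          exact pow_le_pow_left₀ hA0 hA_le 2
        rw [mul_pow, Real.sq_sqrt hI0] at this
        nlinarith [sq_nonneg I, sq_nonneg (1 + ℓ)]
      · -- I > 1 : take ε = 1
        have h := hAε 1 one_pos le_rfl
        rw [div_one, one_mul] at h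
        have h2 : A ≤ (1 + ℓ) * I := by nlinarith
        have h3 : A ^ 2 ≤ ((1 + ℓ) * I) ^ 2 := pow_le_pow_left₀ hA0 h2 2
        nlinarith [sq_nonneg (1 + ℓ), sq_nonneg I]
  -- pointwise bound on g
  have hgpt : ∀ x ∈ Set.Icc (0:ℝ) ℓ, |g x| ≤ |g 0| + A := by
    intro x hx
    rw [hg x hx]
    have h1 : |∫ y in (0:ℝ)..x, φ y| ≤ ∫ y in (0:ℝ)..x, |φ y| := by
      simpa [Real.norm_eq_abs] using
        intervalIntegral.norm_integral_le_integral_norm (f := φ) (a := 0) (b := x)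
          (μ := volume) hx.1
    have h2 : (∫ y in (0:ℝ)..x, |φ y|) ≤ A := by
      rw [intervalIntegral.integral_of_le hx.1]
      refine setIntegral_mono_set hφabs
        (Filter.Eventually.of_forall fun y => abs_nonneg _) ?_
      exact HasSubset.Subset.eventuallyLE (Set.Ioc_subset_Ioc le_rfl hx.2)
    calc |g 0 + ∫ y in (0:ℝ)..x, φ y| ≤ |g 0| + |∫ y in (0:ℝ)..x, φ y| := abs_add_le _ _
      _ ≤ |g 0| + A := by linarith
  -- g is a.e. strongly measurable on (0,ℓ] (it agrees with a continuous primitive)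
  have hIccInt : IntegrableOn φ (Set.Icc 0 ℓ) := by
    rwa [integrableOn_Icc_iff_integrableOn_Ioc]
  have hFcont : ContinuousOn (fun x => g 0 + ∫ t in Set.Ioc (0:ℝ) x, φ t)
      (Set.Icc 0 ℓ) :=
    continuousOn_const.add (intervalIntegral.continuousOn_primitive hIccInt)
  have hgm : AEStronglyMeasurable (fun x => g x ^ 2)
      (volume.restrict (Set.Ioc (0:ℝ) ℓ)) := by
    have hF : AEStronglyMeasurable (fun x => g 0 + ∫ t in Set.Ioc (0:ℝ) x, φ t)
        (volume.restrict (Set.Ioc (0:ℝ) ℓ)) := by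
      have := hFcont.aestronglyMeasurable (μ := volume) measurableSet_Icc
      exact this.mono_measure (Measure.restrict_mono Set.Ioc_subset_Icc_self le_rfl)
    refine ((hF.pow 2)).congr ?_
    rw [Filter.EventuallyEq, ae_restrict_iff' measurableSet_Ioc]
    refine Filter.Eventually.of_forall fun x hx => ?_
    have hx' : x ∈ Set.Icc (0:ℝ) ℓ := Set.Ioc_subset_Icc_self hx
    simp only [Pi.pow_apply]
    rw [hg x hx', intervalIntegral.integral_of_le hx'.1]
  -- integral bound
  have hmain : ∫ x in (0:ℝ)..ℓ, g x ^ 2 ≤ (|g 0| + A) ^ 2 * ℓ := by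
    have h := norm_setIntegral_le_of_norm_le_const (μ := volume)
      (s := Set.Ioc (0:ℝ) ℓ) (f := fun x => g x ^ 2) (C := (|g 0| + A) ^ 2)
      hvolfin ?_
    · rw [measureReal_def, hvol] at h
      rw [intervalIntegral.integral_of_le hℓ.le]
      calc ∫ x in Set.Ioc (0:ℝ) ℓ, g x ^ 2 ≤ ‖∫ x in Set.Ioc (0:ℝ) ℓ, g x ^ 2‖ :=
            le_abs_self _
        _ ≤ (|g 0| + A) ^ 2 * ℓ := h
    · intro x hx
      have hb := hgpt x (Set.Ioc_subset_Icc_self hx)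
      have h2 : g x ^ 2 ≤ (|g 0| + A) ^ 2 := by
        rw [← sq_abs (g x)]
        exact pow_le_pow_left₀ (abs_nonneg _) hb 2
      show ‖g x ^ 2‖ ≤ (|g 0| + A) ^ 2
      rw [Real.norm_eq_abs, abs_of_nonneg (sq_nonneg _)]
      exact h2
  -- put everything together
  set M := g 0 ^ 2 + g ℓ ^ 2 + I with hM
  have hg0M : g 0 ^ 2 ≤ M := by nlinarith [sq_nonneg (g ℓ)]
  have hIM : I ≤ M := by nlinarith [sq_nonneg (g 0), sq_nonneg (g ℓ)]
  have hM0 : 0 ≤ M := le_trans hI0 hIM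
  have hI2M : I ^ 2 ≤ M ^ 2 := pow_le_pow_left₀ hI0 hIM 2
  have hB : (|g 0| + A) ^ 2 ≤ 2 * g 0 ^ 2 + 2 * A ^ 2 := by
    nlinarith [sq_nonneg (|g 0| - A), sq_abs (g 0)]
  calc ∫ x in (0:ℝ)..ℓ, g x ^ 2 ≤ (|g 0| + A) ^ 2 * ℓ := hmain
    _ ≤ (2 * g 0 ^ 2 + 2 * ((1 + ℓ) ^ 2 * (I + I ^ 2))) * ℓ := by nlinarith
    _ ≤ 2 * ℓ * (1 + (1 + ℓ) ^ 2) * (M + M ^ 2) := by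
      nlinarith [mul_le_mul_of_nonneg_left hIM (by positivity : (0:ℝ) ≤ 2 * ℓ * (1 + ℓ) ^ 2),
        mul_le_mul_of_nonneg_left hI2M (by positivity : (0:ℝ) ≤ 2 * ℓ * (1 + ℓ) ^ 2),
        mul_le_mul_of_nonneg_left hg0M (by positivity : (0:ℝ) ≤ 2 * ℓ),
        sq_nonneg M, hM0, hℓ.le]
end
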